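/- arXiv:2208.14987 — 6 statements merged into one kernel-verified Lean document; each statement's English description precedes it below -/
import Mathlib

section
/- Let Y be an integrable real random variable whose law is symmetric (Y and −Y have the same distribution), let σ > 0 and c ∈ ℝ. Define G(x) = E[(min(x, x + Y))⁺] for x ≥ 0 and G(x) = E[(max(x, x + Y))⁻] for x ≤ 0, and set g(x) = c − σ²|x| + 2σ²G(x). Then for every x ∈ ℝ, g(x) = c + σ² ∫_0^x (2P[Y < s] − 1) ds (oriented interval integral from 0 to x). -/
open MeasureTheory Set

lemma aux_swap {Ω : Type*} [MeasurableSpace Ω] (μ : Measure Ω)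
    (Y : Ω → ℝ) (hYm : AEMeasurable Y μ)
    (hsym : Measure.map Y μ = Measure.map (fun ω => -(Y ω)) μ) (s : ℝ) :
    μ {ω | s < Y ω} = μ {ω | Y ω < -s} := by
  have h1 : μ {ω | s < Y ω} = μ.map Y (Ioi s) := by
    rw [Measure.map_apply_of_aemeasurable hYm measurableSet_Ioi]; rfl
  rw [h1, hsym, Measure.map_apply_of_aemeasurable (f := fun ω => -(Y ω)) hYm.neg measurableSet_Ioi]
  congr 1
  ext ω
  simp [lt_neg]

lemma aux_F_mono {Ω : Type*} [MeasurableSpace Ω] (μ : Measure Ω) [IsProbabilityMeasure μ]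
    (Y : Ω → ℝ) : Monotone (fun s => (μ {ω | Y ω < s}).toReal) := by
  intro a b hab
  exact ENNReal.toReal_mono (measure_ne_top μ _)
    (measure_mono (fun ω h => lt_of_lt_of_le h hab))

lemma aux_key {Ω : Type*} [MeasurableSpace Ω] (μ : Measure Ω) [IsProbabilityMeasure μ]
    (Y : Ω → ℝ) (hY : Integrable Y μ)
    (hsym : Measure.map Y μ = Measure.map (fun ω => -(Y ω)) μ)
    {z : ℝ} (hz : 0 ≤ z) :
    ∫ ω, max (min z (z + Y ω)) 0 ∂μ = ∫ s in (0:ℝ)..z, (μ {ω | Y ω < s}).toReal := by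
  have hYm : AEMeasurable Y μ := hY.aemeasurable
  set F : ℝ → ℝ := fun s => (μ {ω | Y ω < s}).toReal with hF
  set f : Ω → ℝ := fun ω => max (min z (z + Y ω)) 0 with hf
  have f_nn : 0 ≤ᵐ[μ] f := Filter.Eventually.of_forall fun ω => le_max_right _ _
  have f_meas : AEMeasurable f μ :=
    ((aemeasurable_const.min (aemeasurable_const.add hYm)).max aemeasurable_const)
  have f_int : Integrable f μ := by
    refine Integrable.mono' (integrable_const z) f_meas.aestronglyMeasurable ?_
    refine Filter.Eventually.of_forall fun ω => ?_
    rw [Real.norm_eq_abs, abs_of_nonneg (le_max_right _ _)]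
    exact max_le (min_le_left _ _) hz
  rw [f_int.integral_eq_integral_meas_lt f_nn]
  have hset : ∀ t ∈ Ioi (0:ℝ),
      (μ {a | t < f a}).toReal = (Ioo 0 z).indicator (fun t => F (z - t)) t := by
    intro t ht
    simp only [mem_Ioi] at ht
    rcases lt_or_ge t z with htz | htz
    · have hmem : t ∈ Ioo 0 z := ⟨ht, htz⟩
      rw [indicator_of_mem hmem]
      have hseteq : {a | t < f a} = {ω | t - z < Y ω} := by
        ext a
        simp only [hf, mem_setOf_eq, lt_max_iff, lt_min_iff, sub_lt_iff_lt_add',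
          not_lt.mpr (le_of_lt ht), or_false]
        constructor
        · rintro ⟨_, h⟩; linarith
        · intro h; exact ⟨htz, by linarith⟩
      rw [hseteq, aux_swap μ Y hYm hsym, hF]
      simp only [neg_sub]
    · have hmem : t ∉ Ioo 0 z := fun h => absurd h.2 (not_lt.mpr htz)
      rw [indicator_of_notMem hmem]
      have hseteq : {a | t < f a} = (∅ : Set Ω) := by
        ext a
        simp only [hf, mem_setOf_eq, lt_max_iff, lt_min_iff, mem_empty_iff_false, iff_false,
          not_or, not_lt, not_and_or]
        constructor
        · left; exact htz
        · exact le_of_lt ht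
      rw [hseteq]
      simp
  change ∫ t in Ioi (0:ℝ), (μ {a | t < f a}).toReal = _
  rw [setIntegral_congr_fun measurableSet_Ioi hset,
    setIntegral_indicator measurableSet_Ioo]
  have hinter : Ioi (0:ℝ) ∩ Ioo 0 z = Ioo 0 z := by
    ext t; simp only [mem_inter_iff, mem_Ioi, mem_Ioo, and_iff_right_iff_imp]
    exact fun h => h.1
  rw [hinter, ← MeasureTheory.integral_Ioc_eq_integral_Ioo,
    ← intervalIntegral.integral_of_le hz, intervalIntegral.integral_comp_sub_left F z]
  simp

theorem stmt_9 {Ω : Type*} [MeasurableSpace Ω] (μ : Measure Ω) [IsProbabilityMeasure μ]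
    (Y : Ω → ℝ) (hY : Integrable Y μ)
    (hsym : Measure.map Y μ = Measure.map (fun ω => -(Y ω)) μ)
    (σ c : ℝ) (hσ : 0 < σ) (G g : ℝ → ℝ)
    (hGpos : ∀ x, 0 ≤ x → G x = ∫ ω, max (min x (x + Y ω)) 0 ∂μ)
    (hGneg : ∀ x, x ≤ 0 → G x = ∫ ω, -min (max x (x + Y ω)) 0 ∂μ)
    (hg : ∀ x, g x = c - σ^2 * |x| + 2 * σ^2 * G x) :
    ∀ x : ℝ, g x = c + σ^2 * ∫ s in (0:ℝ)..x, (2 * (μ {ω | Y ω < s}).toReal - 1) := by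
  have hYm : AEMeasurable Y μ := hY.aemeasurable
  set F : ℝ → ℝ := fun s => (μ {ω | Y ω < s}).toReal with hF
  have hFmono : Monotone F := aux_F_mono μ Y
  have hFint : ∀ a b : ℝ, IntervalIntegrable F volume a b :=
    fun a b => hFmono.intervalIntegrable
  have hsplit : ∀ a b : ℝ, ∫ s in a..b, (2 * F s - 1) =
      2 * (∫ s in a..b, F s) - (b - a) := by
    intro a b
    rw [intervalIntegral.integral_sub (((hFint a b).const_mul 2)) intervalIntegrable_const,
      intervalIntegral.integral_const_mul, intervalIntegral.integral_const]
    simp [mul_comm]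
  intro x
  rcases le_total 0 x with hx | hx
  · -- x ≥ 0
    have hGx : G x = ∫ s in (0:ℝ)..x, F s := by
      rw [hGpos x hx, aux_key μ Y hY hsym hx]
    rw [hg x, abs_of_nonneg hx]
    show _ = c + σ^2 * ∫ s in (0:ℝ)..x, (2 * F s - 1)
    rw [hsplit 0 x, ← hGx]
    ring
  · -- x ≤ 0
    -- pointwise identity and symmetry
    have hpt : ∀ ω, -min (max x (x + Y ω)) 0 = max (min (-x) (-x + -(Y ω))) 0 := by
      intro ω
      rw [show -x + -(Y ω) = -(x + Y ω) by ring, min_neg_neg, ← neg_zero (G := ℝ),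
        max_neg_neg, neg_zero]
    have hcont : Continuous (fun s : ℝ => max (min (-x) (-x + s)) 0) := by
      fun_prop
    have hGx : G x = ∫ s in (0:ℝ)..(-x), F s := by
      rw [hGneg x hx]
      have h1 : ∫ ω, -min (max x (x + Y ω)) 0 ∂μ
          = ∫ ω, max (min (-x) (-x + -(Y ω))) 0 ∂μ := by
        exact integral_congr_ae (Filter.Eventually.of_forall fun ω => hpt ω)
      have h2 : ∫ ω, max (min (-x) (-x + -(Y ω))) 0 ∂μ
          = ∫ ω, max (min (-x) (-x + Y ω)) 0 ∂μ := by
        have e1 : ∫ ω, max (min (-x) (-x + -(Y ω))) 0 ∂μ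
            = ∫ y, max (min (-x) (-x + y)) 0 ∂(Measure.map (fun ω => -(Y ω)) μ) :=
          (integral_map hYm.neg hcont.aestronglyMeasurable).symm
        have e2 : ∫ y, max (min (-x) (-x + y)) 0 ∂(Measure.map Y μ)
            = ∫ ω, max (min (-x) (-x + Y ω)) 0 ∂μ :=
          integral_map hYm hcont.aestronglyMeasurable
        rw [e1, ← hsym, e2]
      rw [h1, h2, aux_key μ Y hY hsym (neg_nonneg.mpr hx)]
    -- a.e. complement identity
    have hatom : ∀ᵐ u ∂(volume : Measure ℝ), μ {ω | Y ω = u} = 0 := by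
      have hcnt : Set.Countable {t : ℝ | 0 < μ {ω | Y ω = t}} :=
        Measure.countable_meas_level_set_pos₀ hYm.nullMeasurable
      have hnull : (volume : Measure ℝ) {t : ℝ | 0 < μ {ω | Y ω = t}} = 0 :=
        hcnt.measure_zero _
      filter_upwards [measure_eq_zero_iff_ae_notMem.mp hnull] with u hu
      simpa using hu
    have hcompl : ∀ᵐ u ∂(volume : Measure ℝ), 2 * F (-u) - 1 = 1 - 2 * F u := by
      filter_upwards [hatom] with u hu
      have h1 : μ {ω | Y ω < -u} = μ {ω | u < Y ω} :=
        (aux_swap μ Y hYm hsym u).symm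
      have hle : μ {ω | Y ω ≤ u} = μ {ω | Y ω < u} := by
        apply le_antisymm
        · have : {ω | Y ω ≤ u} ⊆ {ω | Y ω < u} ∪ {ω | Y ω = u} := by
            intro ω h
            replace h : Y ω ≤ u := h
            rcases lt_or_eq_of_le h with h | h
            · exact Or.inl h
            · exact Or.inr h
          calc μ {ω | Y ω ≤ u} ≤ μ ({ω | Y ω < u} ∪ {ω | Y ω = u}) := measure_mono this
            _ ≤ μ {ω | Y ω < u} + μ {ω | Y ω = u} := measure_union_le _ _
            _ = μ {ω | Y ω < u} := by rw [hu, add_zero]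
        · exact measure_mono fun ω (h : ω ∈ {ω | Y ω < u}) =>
            show Y ω ≤ u from le_of_lt h
      have hcpl : μ {ω | Y ω ≤ u} + μ {ω | u < Y ω} = 1 := by
        have hns : NullMeasurableSet {ω | Y ω ≤ u} μ := by
          have := hYm.nullMeasurable (measurableSet_Iic (a := u))
          exact this
        have := measure_add_measure_compl₀ hns
        rw [measure_univ] at this
        have hc : {ω | Y ω ≤ u}ᶜ = {ω | u < Y ω} := by
          ext ω; simp [not_le]
        rwa [hc] at this
      have hfin1 : μ {ω | Y ω ≤ u} ≠ ⊤ := measure_ne_top μ _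
      have hfin2 : μ {ω | u < Y ω} ≠ ⊤ := measure_ne_top μ _
      have htr : (μ {ω | Y ω ≤ u}).toReal + (μ {ω | u < Y ω}).toReal = 1 := by
        rw [← ENNReal.toReal_add hfin1 hfin2, hcpl, ENNReal.toReal_one]
      have : F (-u) = (μ {ω | u < Y ω}).toReal := by rw [hF]; simp only; rw [h1]
      rw [this]
      have : F u = (μ {ω | Y ω ≤ u}).toReal := by rw [hF]; simp only; rw [← hle]
      rw [this]
      linarith
    rw [hg x, abs_of_nonpos hx]
    show _ = c + σ^2 * ∫ s in (0:ℝ)..x, (2 * F s - 1)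
    have hI : ∫ s in (0:ℝ)..x, (2 * F s - 1) = x + 2 * ∫ s in (0:ℝ)..(-x), F s := by
      have e0 : ∫ s in (0:ℝ)..x, (2 * F s - 1) = -∫ s in x..(0:ℝ), (2 * F s - 1) :=
        intervalIntegral.integral_symm x 0
      have e1 : ∫ u in (0:ℝ)..(-x), (2 * F (-u) - 1) = ∫ s in x..(0:ℝ), (2 * F s - 1) := by
        have := intervalIntegral.integral_comp_neg (a := (0:ℝ)) (b := -x)
          (fun s => 2 * F s - 1)
        simpa using this
      have e2 : ∫ u in (0:ℝ)..(-x), (2 * F (-u) - 1)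
          = ∫ u in (0:ℝ)..(-x), (1 - 2 * F u) := by
        apply intervalIntegral.integral_congr_ae
        filter_upwards [hcompl] with u hu _
        exact hu
      have e3 : ∫ u in (0:ℝ)..(-x), (1 - 2 * F u)
          = (-x) - 2 * ∫ u in (0:ℝ)..(-x), F u := by
        rw [intervalIntegral.integral_sub intervalIntegrable_const ((hFint 0 (-x)).const_mul 2),
          intervalIntegral.integral_const_mul, intervalIntegral.integral_const]
        simp
      rw [e0, ← e1, e2, e3]
      ring
    rw [hI, hGx]
    ring
end

section
/- Let Y be an integrable real random variable whose law is symmetric (Y and −Y have the same distribution) and atomless (P[Y = y] = 0 for every y ∈ ℝ), let σ > 0 and c ∈ ℝ. Define G(x) = E[(min(x, x + Y))⁺] for x ≥ 0 and G(x) = E[(max(x, x + Y))⁻] for x ≤ 0, and set g(x) = c − σ²|x| + 2σ²G(x). Then g is differentiable at every x ∈ ℝ, with derivative g′(x) = σ²(2P[Y ≤ x] − 1). -/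
open MeasureTheory Set
open Filter in

lemma aux_deriv10 {Ω : Type*} [MeasurableSpace Ω] (μ : Measure Ω) [IsProbabilityMeasure μ]
    (Y : Ω → ℝ) (hY : Integrable Y μ) (x₀ : ℝ) (h0 : μ {ω | Y ω = -x₀} = 0) :
    HasDerivAt (fun x => ∫ ω, max (x + Y ω) 0 ∂μ) ((μ {ω | -x₀ < Y ω}).toReal) x₀ := by
  have hYm : AEMeasurable Y μ := hY.1.aemeasurable
  set Y' : Ω → ℝ := hYm.mk Y with hY'def
  have hY'meas : Measurable Y' := hYm.measurable_mk
  have hYY' : Y =ᵐ[μ] Y' := hYm.ae_eq_mk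
  set F' : Ω → ℝ := (Y' ⁻¹' Ioi (-x₀)).indicator (1 : Ω → ℝ) with hF'def
  have hseteq : (Y ⁻¹' Ioi (-x₀)) =ᵐ[μ] (Y' ⁻¹' Ioi (-x₀)) := by
    rw [eventuallyEq_set]
    filter_upwards [hYY'] with ω h
    simp [mem_preimage, h]
  have key := hasDerivAt_integral_of_dominated_loc_of_lip (F := fun x ω => max (x + Y ω) 0)
    (F' := F') (x₀ := x₀) (bound := fun _ => (1:ℝ)) (Metric.ball_mem_nhds x₀ one_pos)
    (by
      filter_upwards with x
      exact ((aemeasurable_const.add hY.1.aemeasurable).max aemeasurable_const).aestronglyMeasurable)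
    ((integrable_const x₀).add hY).pos_part
    (((measurable_const : Measurable (fun _ : Ω => (1:ℝ))).indicator (hY'meas measurableSet_Ioi)).aestronglyMeasurable)
    (by
      filter_upwards with ω
      have hL : LipschitzOnWith 1 (fun x : ℝ => max (x + Y ω) 0) (Metric.ball x₀ 1) := by
        apply LipschitzOnWith.of_dist_le_mul
        intro a _ b _
        simp only [Real.dist_eq, NNReal.coe_one, one_mul]
        calc |max (a + Y ω) 0 - max (b + Y ω) 0| ≤ |(a + Y ω) - (b + Y ω)| :=
              abs_max_sub_max_le_abs _ _ _
          _ = |a - b| := by ring_nf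
      convert hL using 2
      simp)
    (integrable_const 1)
    (by
      have hne : ∀ᵐ ω ∂μ, Y ω ≠ -x₀ := by
        rw [ae_iff]; simpa using h0
      filter_upwards [hne, hYY'] with ω hω hω'
      rcases lt_or_gt_of_ne hω with hlt | hgt
      · -- Y ω < -x₀, so x₀ + Y ω < 0, derivative 0, F' ω = 0
        have hF'0 : F' ω = 0 := by
          rw [hF'def]
          apply indicator_of_notMem
          rw [mem_preimage, mem_Ioi, ← hω']
          push_neg
          linarith
        rw [hF'0]
        have : (fun x : ℝ => max (x + Y ω) 0) =ᶠ[nhds x₀] fun _ => (0:ℝ) := by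
          have hopen : IsOpen {x : ℝ | x + Y ω < 0} := isOpen_lt (by continuity) continuous_const
          have hmem : x₀ ∈ {x : ℝ | x + Y ω < 0} := by
            simp only [mem_setOf_eq]; linarith
          filter_upwards [hopen.mem_nhds hmem] with x hx
          simp [max_eq_right hx.le]
        exact (hasDerivAt_const x₀ (0:ℝ)).congr_of_eventuallyEq this
      · -- Y ω > -x₀
        have hF'1 : F' ω = 1 := by
          rw [hF'def]
          apply indicator_of_mem
          rw [mem_preimage, mem_Ioi, ← hω']
          exact hgt
        rw [hF'1]
        have : (fun x : ℝ => max (x + Y ω) 0) =ᶠ[nhds x₀] fun x => x + Y ω := by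
          have hopen : IsOpen {x : ℝ | 0 < x + Y ω} := isOpen_lt continuous_const (by continuity)
          have hmem : x₀ ∈ {x : ℝ | 0 < x + Y ω} := by
            simp only [mem_setOf_eq]; linarith
          filter_upwards [hopen.mem_nhds hmem] with x hx
          simp [max_eq_left hx.le]
        exact ((hasDerivAt_id x₀).add_const (Y ω)).congr_of_eventuallyEq this)
  have hint : ∫ ω, F' ω ∂μ = (μ {ω | -x₀ < Y ω}).toReal := by
    rw [hF'def]
    rw [integral_indicator_one (hY'meas measurableSet_Ioi)]
    show (μ _).toReal = _
    congr 1
    exact (measure_congr hseteq.symm).trans rfl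
  rw [← hint]
  exact key.2

theorem stmt_10 {Ω : Type*} [MeasurableSpace Ω] (μ : Measure Ω) [IsProbabilityMeasure μ]
    (Y : Ω → ℝ) (hY : Integrable Y μ)
    (hsym : Measure.map Y μ = Measure.map (fun ω => -(Y ω)) μ)
    (hatomless : ∀ y : ℝ, μ {ω | Y ω = y} = 0)
    (σ c : ℝ) (hσ : 0 < σ) (G g : ℝ → ℝ)
    (hGpos : ∀ x, 0 ≤ x → G x = ∫ ω, max (min x (x + Y ω)) 0 ∂μ)
    (hGneg : ∀ x, x ≤ 0 → G x = ∫ ω, -min (max x (x + Y ω)) 0 ∂μ)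
    (hg : ∀ x, g x = c - σ^2 * |x| + 2 * σ^2 * G x) :
    ∀ x : ℝ, HasDerivAt g (σ^2 * (2 * (μ {ω | Y ω ≤ x}).toReal - 1)) x := by
  have hYm : AEMeasurable Y μ := hY.1.aemeasurable
  have hintY : Integrable (fun ω => max (Y ω) 0) μ := hY.pos_part
  have hintx : ∀ x : ℝ, Integrable (fun ω => max (x + Y ω) 0) μ :=
    fun x => ((integrable_const x).add hY).pos_part
  have hgf : ∀ x : ℝ, g x = c - 2*σ^2 * (∫ ω, max (Y ω) 0 ∂μ) - σ^2 * x
      + 2*σ^2 * ∫ ω, max (x + Y ω) 0 ∂μ := by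
    intro x
    rcases le_total 0 x with hx | hx
    · rw [hg, hGpos x hx, abs_of_nonneg hx]
      have hpt : ∀ ω, max (min x (x + Y ω)) 0 = max (x + Y ω) 0 - max (Y ω) 0 := by
        intro ω
        rcases le_total 0 (Y ω) with hy | hy
        · rw [min_eq_left (by linarith), max_eq_left hx, max_eq_left (by linarith),
            max_eq_left hy]; ring
        · rw [min_eq_right (by linarith), max_eq_right hy]; ring
      have hI : ∫ ω, max (min x (x + Y ω)) 0 ∂μ
          = ∫ ω, (max (x + Y ω) 0 - max (Y ω) 0) ∂μ :=
        integral_congr_ae (Filter.Eventually.of_forall hpt)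
      rw [hI, integral_sub (hintx x) hintY]; ring
    · rw [hg, hGneg x hx, abs_of_nonpos hx]
      have hpt : ∀ ω, -min (max x (x + Y ω)) 0 = max (x + Y ω) 0 - max (Y ω) 0 - x := by
        intro ω
        rcases le_total 0 (Y ω) with hy | hy
        · rw [max_eq_right (by linarith), max_eq_left hy]
          rcases le_total 0 (x + Y ω) with hxy | hxy
          · rw [min_eq_right hxy, max_eq_left hxy]; ring
          · rw [min_eq_left hxy, max_eq_right hxy]; ring
        · rw [max_eq_left (by linarith), min_eq_left hx, max_eq_right hy,
            max_eq_right (by linarith)]; ring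
      have hI : ∫ ω, -min (max x (x + Y ω)) 0 ∂μ
          = ∫ ω, (max (x + Y ω) 0 - max (Y ω) 0 - x) ∂μ :=
        integral_congr_ae (Filter.Eventually.of_forall hpt)
      have hint2 : Integrable (fun ω => max (x + Y ω) 0 - max (Y ω) 0) μ :=
        (hintx x).sub hintY
      rw [hI, integral_sub hint2 (integrable_const x),
        integral_sub (hintx x) hintY, integral_const]
      simp only [probReal_univ, smul_eq_mul, one_mul]
      ring
  have hmeas_id : ∀ x : ℝ, μ {ω | Y ω ≤ x} = μ {ω | -x < Y ω} := by
    intro x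
    have h1 : μ {ω | Y ω ≤ x} = μ {ω | Y ω < x} := by
      apply le_antisymm
      · calc μ {ω | Y ω ≤ x} ≤ μ ({ω | Y ω < x} ∪ {ω | Y ω = x}) :=
              measure_mono (fun ω h => (lt_or_eq_of_le (show Y ω ≤ x from h)).imp id id)
          _ ≤ μ {ω | Y ω < x} + μ {ω | Y ω = x} := measure_union_le _ _
          _ = μ {ω | Y ω < x} := by rw [hatomless x, add_zero]
      · exact measure_mono fun ω h => le_of_lt (show Y ω < x from h)
    have h2 : μ {ω | Y ω < x} = μ.map Y (Iio x) :=
      (Measure.map_apply_of_aemeasurable hYm measurableSet_Iio).symm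
    have h3 : μ.map (fun ω => -(Y ω)) (Iio x) = μ {ω | -x < Y ω} := by
      rw [Measure.map_apply_of_aemeasurable (f := fun ω => -(Y ω)) hYm.neg measurableSet_Iio]
      congr 1
      ext ω
      simp [neg_lt]
    rw [h1, h2, hsym, h3]
  intro x
  have hd := aux_deriv10 μ Y hY x (hatomless (-x))
  rw [funext hgf]
  have h2 := ((hasDerivAt_const x (c - 2*σ^2 * (∫ ω, max (Y ω) 0 ∂μ))).sub
    ((hasDerivAt_id x).const_mul (σ^2))).add (hd.const_mul (2*σ^2))
  convert h2 using 1
  case e'_4 => rfl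
  case e'_5 => rfl
  case e'_8 => rfl
  rw [hmeas_id x]
  ring
end

section
/- Let Y be an integrable real random variable whose law is symmetric (Y and −Y have the same distribution) and has a continuous density ρ : ℝ → [0,∞) with respect to Lebesgue measure, let σ > 0 and c ∈ ℝ. Define G(x) = E[(min(x, x + Y))⁺] for x ≥ 0 and G(x) = E[(max(x, x + Y))⁻] for x ≤ 0, and set g(x) = c − σ²|x| + 2σ²G(x). Then g is twice differentiable at every x ∈ ℝ, with second derivative g″(x) = 2σ²ρ(x); equivalently, ρ(x) = g″(x)/(2σ²). -/
open MeasureTheory Set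

private lemma map_neg_withDensity' (f : ℝ → ENNReal) (hf : Measurable f) :
    Measure.map (fun y : ℝ => -y) (volume.withDensity f)
      = volume.withDensity (fun y => f (-y)) := by
  ext s hs
  rw [Measure.map_apply measurable_neg hs, withDensity_apply _ (hs.preimage measurable_neg),
    withDensity_apply _ hs]
  have h1 : ∫⁻ y in s, f (-y) ∂(volume : Measure ℝ)
      = ∫⁻ y in s, f (-y) ∂(Measure.map (fun y : ℝ => -y) volume) := by
    rw [Measure.map_neg_eq_self (volume : Measure ℝ)]
  rw [h1, setLIntegral_map (f := fun y : ℝ => f (-y)) (g := fun y : ℝ => -y) hs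
    (hf.comp measurable_neg) measurable_neg]
  simp

theorem stmt_11 {Ω : Type*} [MeasurableSpace Ω] (μ : Measure Ω) [IsProbabilityMeasure μ]
    (Y : Ω → ℝ) (hY : Integrable Y μ)
    (hsym : Measure.map Y μ = Measure.map (fun ω => -(Y ω)) μ)
    (ρ : ℝ → ℝ) (hρ_cont : Continuous ρ) (hρ_nonneg : ∀ y, 0 ≤ ρ y)
    (hdensity : Measure.map Y μ = volume.withDensity (fun y => ENNReal.ofReal (ρ y)))
    (σ c : ℝ) (hσ : 0 < σ) (G g : ℝ → ℝ)
    (hGpos : ∀ x, 0 ≤ x → G x = ∫ ω, max (min x (x + Y ω)) 0 ∂μ)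
    (hGneg : ∀ x, x ≤ 0 → G x = ∫ ω, -min (max x (x + Y ω)) 0 ∂μ)
    (hg : ∀ x, g x = c - σ^2 * |x| + 2 * σ^2 * G x) :
    ∃ g' : ℝ → ℝ, (∀ x : ℝ, HasDerivAt g (g' x) x) ∧
      ∀ x : ℝ, HasDerivAt g' (2 * σ^2 * ρ x) x := by
  have hmY : AEMeasurable Y μ := hY.aemeasurable
  have hfmeas : Measurable fun y : ℝ => ENNReal.ofReal (ρ y) :=
    ENNReal.measurable_ofReal.comp hρ_cont.measurable
  -- evenness of ρ
  have heven : ∀ x, ρ (-x) = ρ x := by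
    have h2 : Measure.map (fun ω => -(Y ω)) μ
        = Measure.map (fun y : ℝ => -y) (Measure.map Y μ) :=
      (AEMeasurable.map_map_of_aemeasurable measurable_neg.aemeasurable hmY).symm
    rw [h2, hdensity, map_neg_withDensity' _ hfmeas] at hsym
    have hae := (withDensity_eq_iff_of_sigmaFinite hfmeas.aemeasurable
      ((hfmeas.comp measurable_neg).aemeasurable)).mp hsym
    have hc : (fun y => ENNReal.ofReal (ρ y)) = fun y => ENNReal.ofReal (ρ (-y)) :=
      ((ENNReal.continuous_ofReal.comp hρ_cont).ae_eq_iff_eq volume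
        (ENNReal.continuous_ofReal.comp (hρ_cont.comp continuous_neg))).mp hae
    intro x
    have h3 := congrFun hc x
    rw [ENNReal.ofReal_eq_ofReal_iff (hρ_nonneg x) (hρ_nonneg (-x))] at h3
    exact h3.symm
  -- integrability and total mass
  have hprob : IsProbabilityMeasure (volume.withDensity (fun y => ENNReal.ofReal (ρ y))) := by
    rw [← hdensity]; exact Measure.isProbabilityMeasure_map hmY
  have hlint : ∫⁻ y, ENNReal.ofReal (ρ y) = 1 := by
    have := hprob.measure_univ
    rwa [withDensity_apply _ MeasurableSet.univ, setLIntegral_univ] at this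
  have hint : Integrable ρ := by
    refine ⟨hρ_cont.aestronglyMeasurable, ?_⟩
    rw [hasFiniteIntegral_iff_ofReal (Filter.Eventually.of_forall hρ_nonneg), hlint]
    exact ENNReal.one_lt_top
  have htot : ∫ y, ρ y = 1 := by
    rw [integral_eq_lintegral_of_nonneg_ae (Filter.Eventually.of_forall hρ_nonneg)
      hρ_cont.aestronglyMeasurable, hlint]
    simp
  -- half masses
  have hIicIoi : ∫ y in Iic (0:ℝ), ρ y = ∫ y in Ioi (0:ℝ), ρ y := by
    have h4 := integral_comp_neg_Ioi 0 ρ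
    simp only [heven, neg_zero] at h4
    exact h4.symm
  have hsum : (∫ y in Iic (0:ℝ), ρ y) + ∫ y in Ioi (0:ℝ), ρ y = 1 := by
    rw [intervalIntegral.integral_Iic_add_Ioi hint.integrableOn hint.integrableOn, htot]
  have hIoi : ∫ y in Ioi (0:ℝ), ρ y = 1/2 := by linarith
  have hIic : ∫ y in Iic (0:ℝ), ρ y = 1/2 := by linarith
  -- pushforward formula
  have hpush : ∀ F : ℝ → ℝ, Continuous F → ∫ ω, F (Y ω) ∂μ = ∫ y, ρ y * F y := by
    intro F hF
    rw [← integral_map hmY hF.aestronglyMeasurable, hdensity]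
    have h5 : (fun y => ENNReal.ofReal (ρ y)) = fun y => ((Real.toNNReal (ρ y) : NNReal) : ENNReal) := rfl
    rw [h5, integral_withDensity_eq_integral_smul
      (f := fun y => (ρ y).toNNReal) (measurable_real_toNNReal.comp hρ_cont.measurable) F]
    congr 1; funext y
    simp [NNReal.smul_def, Real.coe_toNNReal _ (hρ_nonneg y)]
  -- antiderivatives
  set Φ : ℝ → ℝ := fun x => ∫ t in (0:ℝ)..x, ρ t with hΦdef
  set Ψ : ℝ → ℝ := fun x => ∫ t in (0:ℝ)..x, t * ρ t with hΨdef
  have hΦd : ∀ x, HasDerivAt Φ (ρ x) x := fun x =>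
    intervalIntegral.integral_hasDerivAt_right (hρ_cont.intervalIntegrable _ _)
      (hρ_cont.stronglyMeasurableAtFilter _ _) hρ_cont.continuousAt
  have htρ : Continuous fun t : ℝ => t * ρ t := continuous_id.mul hρ_cont
  have hΨd : ∀ x, HasDerivAt Ψ (x * ρ x) x := fun x =>
    intervalIntegral.integral_hasDerivAt_right (htρ.intervalIntegrable _ _)
      (htρ.stronglyMeasurableAtFilter _ _) htρ.continuousAt
  have hΦodd : ∀ x, Φ (-x) = -Φ x := by
    intro x
    have h6 := intervalIntegral.integral_comp_neg (a := (0:ℝ)) (b := x) (f := ρ)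
    simp only [heven, neg_zero] at h6
    have e2 := intervalIntegral.integral_symm (f := ρ) (μ := volume) 0 (-x)
    simp only [hΦdef]
    linarith [h6, e2]
  have hΨeven : ∀ x, Ψ (-x) = Ψ x := by
    intro x
    have h6 := intervalIntegral.integral_comp_neg (a := (0:ℝ)) (b := x)
      (f := fun t => t * ρ t)
    simp only [heven, neg_zero, neg_mul] at h6
    rw [intervalIntegral.integral_neg] at h6
    have e2 := intervalIntegral.integral_symm (f := fun t => t * ρ t) (μ := volume) 0 (-x)
    simp only [hΨdef]
    linarith [h6, e2]
  -- the triangle integral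
  have hA : ∀ x : ℝ, ∫ y in (0:ℝ)..x, ρ y * (x - y) = x * Φ x - Ψ x := by
    intro x
    have h7 : ∀ y : ℝ, ρ y * (x - y) = x * ρ y - y * ρ y := fun y => by ring
    simp only [h7]
    rw [intervalIntegral.integral_sub (f := fun y => x * ρ y) (g := fun y => y * ρ y)
      ((continuous_const.mul hρ_cont).intervalIntegrable _ _)
      (htρ.intervalIntegrable _ _), intervalIntegral.integral_const_mul]
  -- main formula for G
  have hG : ∀ x : ℝ, G x = |x| / 2 + (x * Φ x - Ψ x) := by
    intro x
    rcases le_total 0 x with hx | hx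
    · -- x ≥ 0
      set F : ℝ → ℝ := fun y => max (min x (x + y)) 0 with hFdef
      have hFc : Continuous F := ((continuous_const.min (continuous_const.add continuous_id)).max continuous_const)
      have hFbdd : ∀ y, ‖F y‖ ≤ |x| := by
        intro y
        rw [Real.norm_eq_abs, abs_le]
        constructor
        · exact le_trans (neg_nonpos.mpr (abs_nonneg x)) (le_max_right _ _)
        · exact max_le ((min_le_left _ _).trans (le_abs_self x)) (abs_nonneg x)
      have hI : Integrable (fun y => ρ y * F y) := by
        have := hint.bdd_mul hFc.aestronglyMeasurable (Filter.Eventually.of_forall hFbdd)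
        simpa [mul_comm] using this
      rw [hGpos x hx, hpush F hFc]
      rw [← intervalIntegral.integral_Iic_add_Ioi (b := (0:ℝ)) hI.integrableOn hI.integrableOn]
      have hIoipart : ∫ y in Ioi (0:ℝ), ρ y * F y = |x| / 2 := by
        have h8 : ∀ y ∈ Ioi (0:ℝ), ρ y * F y = ρ y * x := by
          intro y hy
          simp only [hFdef]
          rw [min_eq_left (by linarith [mem_Ioi.mp hy]), max_eq_left hx]
        rw [setIntegral_congr_fun measurableSet_Ioi h8, integral_mul_const, hIoi,
          abs_of_nonneg hx]
        ring
      have hIicpart : ∫ y in Iic (0:ℝ), ρ y * F y = x * Φ x - Ψ x := by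
        have hsplit : Iic (-x) ∪ Ioc (-x) (0:ℝ) = Iic 0 := Iic_union_Ioc_eq_Iic (by linarith)
        rw [← hsplit, setIntegral_union (Iic_disjoint_Ioc le_rfl) measurableSet_Ioc
          hI.integrableOn hI.integrableOn]
        have h9 : ∀ y ∈ Iic (-x), ρ y * F y = 0 := by
          intro y hy
          have : min x (x + y) ≤ 0 := (min_le_right _ _).trans (by linarith [mem_Iic.mp hy])
          simp only [hFdef]
          rw [max_eq_right this, mul_zero]
        have h10 : ∀ y ∈ Ioc (-x) (0:ℝ), ρ y * F y = ρ y * (x + y) := by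
          intro y hy
          obtain ⟨hy1, hy2⟩ := mem_Ioc.mp hy
          simp only [hFdef]
          rw [min_eq_right (by linarith), max_eq_left (by linarith)]
        rw [setIntegral_eq_zero_of_forall_eq_zero h9, zero_add,
          setIntegral_congr_fun measurableSet_Ioc h10,
          ← intervalIntegral.integral_of_le (by linarith : -x ≤ (0:ℝ))]
        have h11 := intervalIntegral.integral_comp_neg (a := (0:ℝ)) (b := x)
          (f := fun y => ρ y * (x + y))
        simp only [heven, neg_zero] at h11
        have h12 : (fun y => ρ y * (x + -y)) = fun y => ρ y * (x - y) := by
          funext y; ring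
        rw [h12] at h11
        rw [← h11, hA x]
      rw [hIoipart, hIicpart]
      ring
    · -- x ≤ 0
      set F : ℝ → ℝ := fun y => -min (max x (x + y)) 0 with hFdef
      have hFc : Continuous F := ((continuous_const.max (continuous_const.add continuous_id)).min continuous_const).neg
      have hFbdd : ∀ y, ‖F y‖ ≤ |x| := by
        intro y
        rw [Real.norm_eq_abs, abs_le]
        constructor
        · have h0 : (0:ℝ) ≤ F y := neg_nonneg.2 (min_le_right _ _)
          linarith [abs_nonneg x]
        · have h13 : F y ≤ -x := neg_le_neg (le_min (le_max_left _ _) hx)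
          calc F y ≤ -x := h13
            _ ≤ |x| := by rw [abs_of_nonpos hx]
      have hI : Integrable (fun y => ρ y * F y) := by
        have := hint.bdd_mul hFc.aestronglyMeasurable (Filter.Eventually.of_forall hFbdd)
        simpa [mul_comm] using this
      rw [hGneg x hx, hpush F hFc]
      rw [← intervalIntegral.integral_Iic_add_Ioi (b := (0:ℝ)) hI.integrableOn hI.integrableOn]
      have hIicpart : ∫ y in Iic (0:ℝ), ρ y * F y = |x| / 2 := by
        have h8 : ∀ y ∈ Iic (0:ℝ), ρ y * F y = ρ y * (-x) := by
          intro y hy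
          simp only [hFdef]
          rw [max_eq_left (by linarith [mem_Iic.mp hy]), min_eq_left hx]
        rw [setIntegral_congr_fun measurableSet_Iic h8, integral_mul_const, hIic,
          abs_of_nonpos hx]
        ring
      have hIoipart : ∫ y in Ioi (0:ℝ), ρ y * F y = x * Φ x - Ψ x := by
        have hsplit : Ioc (0:ℝ) (-x) ∪ Ioi (-x) = Ioi 0 := Ioc_union_Ioi_eq_Ioi (by linarith)
        rw [← hsplit, setIntegral_union (Ioc_disjoint_Ioi le_rfl) measurableSet_Ioi
          hI.integrableOn hI.integrableOn]
        have h9 : ∀ y ∈ Ioi (-x), ρ y * F y = 0 := by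
          intro y hy
          have h14 : (0:ℝ) ≤ x + y := by linarith [mem_Ioi.mp hy]
          have h15 : (0:ℝ) ≤ max x (x + y) := le_max_of_le_right h14
          simp only [hFdef]
          rw [min_eq_right h15, neg_zero, mul_zero]
        have h10 : ∀ y ∈ Ioc (0:ℝ) (-x), ρ y * F y = ρ y * (-x - y) := by
          intro y hy
          obtain ⟨hy1, hy2⟩ := mem_Ioc.mp hy
          simp only [hFdef]
          rw [max_eq_right (by linarith), min_eq_left (by linarith)]
          ring
        rw [setIntegral_eq_zero_of_forall_eq_zero h9, add_zero,
          setIntegral_congr_fun measurableSet_Ioc h10,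
          ← intervalIntegral.integral_of_le (by linarith : (0:ℝ) ≤ -x)]
        have h16 := hA (-x)
        have h17 : (∫ y in (0:ℝ)..(-x), ρ y * (-x - y)) = -x * Φ (-x) - Ψ (-x) := h16
        rw [h17, hΦodd x, hΨeven x]
        ring
      rw [hIicpart, hIoipart]
  -- final formula for g
  have hgf : ∀ x, g x = c + 2 * σ^2 * (x * Φ x - Ψ x) := by
    intro x
    rw [hg x, hG x]
    ring
  refine ⟨fun x => 2 * σ^2 * Φ x, ?_, ?_⟩
  · intro x
    have h18 : HasDerivAt (fun u => c + 2 * σ^2 * (u * Φ u - Ψ u))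
        (2 * σ^2 * Φ x) x := by
      have h19 := (((hasDerivAt_id x).mul (hΦd x)).sub (hΨd x)).const_mul (2 * σ^2)
      have h20 := h19.const_add c
      refine h20.congr_deriv ?_
      simp only [id]
      ring
    have h21 : g = fun u => c + 2 * σ^2 * (u * Φ u - Ψ u) := funext hgf
    rw [h21]
    exact h18
  · intro x
    exact (hΦd x).const_mul _
end

section
/- Let σ₁ > 0 and let X₁, X₂ be real random variables on a probability space with X₁ integrable. Suppose that for every bounded continuously differentiable g : ℝ → ℝ with bounded derivative and every bounded continuous h : ℝ → ℝ, one has E[h(X₂)(σ₁² g′(X₁) − X₁ g(X₁))] = 0. Then X₁ is distributed as a centered Gaussian with variance σ₁² and X₁ is independent of X₂. -/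
open MeasureTheory ProbabilityTheory

section SteinAux
open Real Set Filter
open scoped NNReal ENNReal


lemma my_tail_eq {v : ℝ} (hv : 0 < v) (x : ℝ) :
    ∫ t in Ioi x, t * rexp (-(2*v)⁻¹ * t^2) = v * rexp (-(2*v)⁻¹ * x^2) := by
  have hb : (0:ℝ) < (2*v)⁻¹ := by positivity
  have hderiv : ∀ t ∈ Ici x, HasDerivAt (fun t => -v * rexp (-(2*v)⁻¹ * t^2))
      (t * rexp (-(2*v)⁻¹ * t^2)) t := by
    intro t _
    have h1 : HasDerivAt (fun t : ℝ => -(2*v)⁻¹ * t^2) (-(2*v)⁻¹ * (2*t)) t := by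
      simpa using ((hasDerivAt_pow 2 t).const_mul (-(2*v)⁻¹))
    have h2 := (h1.exp.const_mul (-v))
    refine h2.congr_deriv ?_
    field_simp
  have hint : IntegrableOn (fun t => t * rexp (-(2*v)⁻¹ * t^2)) (Ioi x) := by
    have := integrable_mul_exp_neg_mul_sq hb
    exact this.integrableOn
  have htend : Tendsto (fun t => -v * rexp (-(2*v)⁻¹ * t^2)) atTop (nhds 0) := by
    have : Tendsto (fun t : ℝ => -(2*v)⁻¹ * t^2) atTop atBot := by
      apply Tendsto.const_mul_atTop_of_neg (by simpa using neg_neg_iff_pos.mpr hb)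
      exact tendsto_pow_atTop (by norm_num)
    simpa using ((Real.tendsto_exp_atBot.comp this).const_mul (-v))
  have := MeasureTheory.integral_Ioi_of_hasDerivAt_of_tendsto' hderiv hint htend
  rw [this]; ring

lemma my_mills {v : ℝ} (hv : 0 < v) {x : ℝ} (hx : 0 < x) :
    ∫ t in Ioi x, rexp (-(2*v)⁻¹ * t^2) ≤ v / x * rexp (-(2*v)⁻¹ * x^2) := by
  have hb : (0:ℝ) < (2*v)⁻¹ := by positivity
  have h1 : IntegrableOn (fun t => rexp (-(2*v)⁻¹ * t^2)) (Ioi x) :=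
    (integrable_exp_neg_mul_sq hb).integrableOn
  have h2 : IntegrableOn (fun t => x⁻¹ * (t * rexp (-(2*v)⁻¹ * t^2))) (Ioi x) :=
    ((integrable_mul_exp_neg_mul_sq hb).const_mul x⁻¹).integrableOn
  have hmono := setIntegral_mono_on h1 h2 measurableSet_Ioi (fun t ht => ?_)
  · calc ∫ t in Ioi x, rexp (-(2*v)⁻¹ * t^2)
        ≤ ∫ t in Ioi x, x⁻¹ * (t * rexp (-(2*v)⁻¹ * t^2)) := hmono
      _ = x⁻¹ * ∫ t in Ioi x, t * rexp (-(2*v)⁻¹ * t^2) := by rw [integral_const_mul]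
      _ = v / x * rexp (-(2*v)⁻¹ * x^2) := by rw [my_tail_eq hv]; field_simp
  · have ht' : x ≤ t := le_of_lt ht
    have : 1 ≤ x⁻¹ * t := by
      rw [← div_eq_inv_mul, le_div_iff₀ hx, one_mul]; exact ht'
    calc rexp (-(2*v)⁻¹ * t^2) = 1 * rexp (-(2*v)⁻¹ * t^2) := (one_mul _).symm
      _ ≤ (x⁻¹ * t) * rexp (-(2*v)⁻¹ * t^2) := by
          apply mul_le_mul_of_nonneg_right this (exp_nonneg _)
      _ = x⁻¹ * (t * rexp (-(2*v)⁻¹ * t^2)) := by ring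

lemma stein_core {v : ℝ} (hv : 0 < v) {f : ℝ → ℝ} (hf : Continuous f) {Cf : ℝ}
    (hCf : ∀ x, |f x| ≤ Cf)
    (hzero : ∫ t, f t * rexp (-(2*v)⁻¹ * t^2) = 0) :
    ∃ g : ℝ → ℝ, ContDiff ℝ 1 g ∧ (∃ C, ∀ x, |g x| ≤ C) ∧ (∃ C, ∀ x, |deriv g x| ≤ C) ∧
      ∀ x, v * deriv g x - x * g x = f x := by
  have hb : (0:ℝ) < (2*v)⁻¹ := by positivity
  set φ : ℝ → ℝ := fun t => rexp (-(2*v)⁻¹ * t^2) with hφdef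
  have hφc : Continuous φ := by fun_prop
  have hφpos : ∀ t, 0 < φ t := fun t => exp_pos _
  have hφint : Integrable φ := integrable_exp_neg_mul_sq hb
  have hfφint : Integrable (fun t => f t * φ t) :=
    hφint.bdd_mul hf.aestronglyMeasurable (c := Cf) (Filter.Eventually.of_forall fun x => by simpa using hCf x)
  set ψ : ℝ → ℝ := fun x => rexp ((2*v)⁻¹ * x^2) with hψdef
  have hψφ : ∀ x, ψ x * φ x = 1 := by
    intro x; rw [hψdef, hφdef]; simp only [← exp_add]; ring_nf; exact exp_zero
  set G : ℝ → ℝ := fun x => ∫ t in Iic x, f t * φ t with hGdef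
  set g : ℝ → ℝ := fun x => ψ x * G x / v with hgdef
  -- derivative of G
  have hGderiv : ∀ a, HasDerivAt G (f a * φ a) a := by
    intro a
    have h1 : HasDerivAt (fun u => G a + ∫ t in a..u, f t * φ t) (f a * φ a) a := by
      refine HasDerivAt.const_add _ ?_
      exact intervalIntegral.integral_hasDerivAt_right hfφint.intervalIntegrable
        ((hf.mul hφc).stronglyMeasurableAtFilter _ _) (hf.mul hφc).continuousAt
    refine h1.congr_of_eventuallyEq (Filter.Eventually.of_forall fun x => ?_)
    have := intervalIntegral.integral_Iic_sub_Iic hfφint.integrableOn hfφint.integrableOn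
      (a := a) (b := x)
    rw [hGdef]; simp only []
    linarith [this]
  have hψderiv : ∀ x, HasDerivAt ψ (x / v * ψ x) x := by
    intro x
    have h1 : HasDerivAt (fun t : ℝ => (2*v)⁻¹ * t^2) ((2*v)⁻¹ * (2*x)) x := by
      simpa using ((hasDerivAt_pow 2 x).const_mul ((2*v)⁻¹))
    have h2 := h1.exp
    convert h2 using 1
    rw [hψdef]; field_simp
  have hgderiv : ∀ x, HasDerivAt g ((x * g x + f x) / v) x := by
    intro x
    have h1 := ((hψderiv x).mul (hGderiv x)).div_const v
    refine h1.congr_deriv ?_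
    have h2 : ψ x * (f x * φ x) = f x := by
      rw [mul_comm (f x) (φ x), ← mul_assoc, hψφ, one_mul]
    rw [hgdef]; simp only []
    rw [h2]; ring
  have hderiv_eq : deriv g = fun x => (x * g x + f x) / v := funext fun x => (hgderiv x).deriv
  have hgdiff : Differentiable ℝ g := fun x => (hgderiv x).differentiableAt
  have hgcont : Continuous g := hgdiff.continuous
  -- bounds
  have hCf0 : 0 ≤ Cf := le_trans (abs_nonneg _) (hCf 0)
  set I : ℝ := ∫ t, φ t with hIdef
  have hI0 : 0 ≤ I := integral_nonneg fun t => (hφpos t).le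
  have htail_le_I : ∀ x : ℝ, ∫ t in Ioi x, φ t ≤ I :=
    fun x => setIntegral_le_integral hφint (Filter.Eventually.of_forall fun t => (hφpos t).le)
  have htail_nonneg : ∀ x : ℝ, 0 ≤ ∫ t in Ioi x, φ t :=
    fun x => setIntegral_nonneg measurableSet_Ioi fun t _ => (hφpos t).le
  set B : ℝ := rexp ((2*v)⁻¹) * I + v with hBdef
  have hψeven : ∀ x : ℝ, ψ (-x) = ψ x := by intro x; rw [hψdef]; simp
  have hT : ∀ x : ℝ, 0 ≤ x → ψ x * ∫ t in Ioi x, φ t ≤ B ∧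
      x * (ψ x * ∫ t in Ioi x, φ t) ≤ B := by
    intro x hx
    have hψpos : (0:ℝ) < ψ x := exp_pos _
    have htnn := htail_nonneg x
    rcases le_or_gt x 1 with h1 | h1
    · have hψle : ψ x ≤ rexp ((2*v)⁻¹) := by
        rw [hψdef]; simp only []
        apply exp_le_exp.mpr
        have hx2 : x^2 ≤ 1 := by nlinarith
        nlinarith [hb.le]
      have key : ψ x * ∫ t in Ioi x, φ t ≤ rexp ((2*v)⁻¹) * I :=
        mul_le_mul hψle (htail_le_I x) htnn (exp_nonneg _)
      have hmn : 0 ≤ ψ x * ∫ t in Ioi x, φ t := by positivity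
      constructor
      · rw [hBdef]; linarith
      · have h2 : x * (ψ x * ∫ t in Ioi x, φ t) ≤ 1 * (ψ x * ∫ t in Ioi x, φ t) :=
          mul_le_mul_of_nonneg_right h1 hmn
        rw [hBdef]; linarith
    · have hx0 : (0:ℝ) < x := zero_lt_one.trans h1
      have hm := my_mills hv hx0
      have key : ψ x * ∫ t in Ioi x, φ t ≤ v / x := by
        calc ψ x * ∫ t in Ioi x, φ t ≤ ψ x * (v / x * φ x) :=
              mul_le_mul_of_nonneg_left hm (exp_nonneg _)
          _ = v / x * (ψ x * φ x) := by ring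
          _ = v / x := by rw [hψφ, mul_one]
      have hE : (0:ℝ) ≤ rexp ((2*v)⁻¹) * I := by positivity
      constructor
      · have h2 : v / x ≤ v := div_le_self hv.le h1.le
        rw [hBdef]; linarith
      · have h2 : x * (ψ x * ∫ t in Ioi x, φ t) ≤ x * (v / x) :=
          mul_le_mul_of_nonneg_left key hx0.le
        have h3 : x * (v / x) = v := by field_simp
        rw [hBdef]; linarith
  have habs_le : ∀ (s : Set ℝ), MeasurableSet s → |∫ t in s, f t * φ t| ≤ Cf * ∫ t in s, φ t := by
    intro s hs
    calc |∫ t in s, f t * φ t| ≤ ∫ t in s, |f t| * |φ t| := by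
          have := norm_integral_le_integral_norm (μ := volume.restrict s) (fun t => f t * φ t)
          simpa [abs_mul] using this
      _ ≤ ∫ t in s, Cf * φ t := by
          refine setIntegral_mono_on ?_ ((hφint.const_mul Cf).integrableOn) hs fun t _ => ?_
          · have habsint : Integrable (fun t => |f t| * |φ t|) := by
              simpa [abs_mul] using hfφint.abs
            exact habsint.integrableOn
          · rw [abs_of_pos (hφpos t)]
            exact mul_le_mul_of_nonneg_right (hCf t) (hφpos t).le
      _ = Cf * ∫ t in s, φ t := integral_const_mul _ _
  have hG_pos : ∀ x : ℝ, |G x| ≤ Cf * ∫ t in Ioi x, φ t := by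
    intro x
    have hsplit := intervalIntegral.integral_Iic_add_Ioi (b := x)
      hfφint.integrableOn hfφint.integrableOn
    have hGx : G x = - ∫ t in Ioi x, f t * φ t := by
      rw [hGdef]; simp only []
      have hz : ∫ t, f t * φ t = 0 := hzero
      linarith
    rw [hGx, abs_neg]
    exact habs_le _ measurableSet_Ioi
  have hG_neg : ∀ x : ℝ, |G x| ≤ Cf * ∫ t in Ioi (-x), φ t := by
    intro x
    have heq : ∫ t in Iic x, φ t = ∫ t in Ioi (-x), φ t := by
      have h2 : (fun t : ℝ => φ (-t)) = φ := funext fun t => by rw [hφdef]; simp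
      have := integral_comp_neg_Iic x (fun t => φ t)
      rw [← this]
      congr 1
      exact funext fun t => (congrFun h2 t).symm
    calc |G x| ≤ Cf * ∫ t in Iic x, φ t := habs_le _ measurableSet_Iic
      _ = Cf * ∫ t in Ioi (-x), φ t := by rw [heq]
  have hgabs : ∀ x, |g x| ≤ Cf * B / v := by
    intro x
    have habs : |g x| = ψ x * |G x| / v := by
      rw [hgdef]; simp only []
      rw [abs_div, abs_mul, abs_of_pos (exp_pos _), abs_of_pos hv]
    rw [habs]
    rcases le_or_gt 0 x with hx | hx
    · have h1 : ψ x * |G x| ≤ Cf * (ψ x * ∫ t in Ioi x, φ t) := by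
        calc ψ x * |G x| ≤ ψ x * (Cf * ∫ t in Ioi x, φ t) :=
              mul_le_mul_of_nonneg_left (hG_pos x) (exp_nonneg _)
          _ = Cf * (ψ x * ∫ t in Ioi x, φ t) := by ring
      have h2 : Cf * (ψ x * ∫ t in Ioi x, φ t) ≤ Cf * B :=
        mul_le_mul_of_nonneg_left (hT x hx).1 hCf0
      have : ψ x * |G x| ≤ Cf * B := le_trans h1 h2
      gcongr
    · have hx' : (0:ℝ) ≤ -x := by linarith
      have h1 : ψ x * |G x| ≤ Cf * (ψ (-x) * ∫ t in Ioi (-x), φ t) := by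
        calc ψ x * |G x| ≤ ψ x * (Cf * ∫ t in Ioi (-x), φ t) :=
              mul_le_mul_of_nonneg_left (hG_neg x) (exp_nonneg _)
          _ = Cf * (ψ (-x) * ∫ t in Ioi (-x), φ t) := by rw [hψeven]; ring
      have h2 : Cf * (ψ (-x) * ∫ t in Ioi (-x), φ t) ≤ Cf * B :=
        mul_le_mul_of_nonneg_left (hT (-x) hx').1 hCf0
      have : ψ x * |G x| ≤ Cf * B := le_trans h1 h2
      gcongr
  have hxgabs : ∀ x, |x * g x| ≤ Cf * B / v := by
    intro x
    have habs : |x * g x| = |x| * (ψ x * |G x|) / v := by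
      rw [hgdef]; simp only []
      rw [abs_mul, abs_div, abs_mul, abs_of_pos (exp_pos _), abs_of_pos hv]
      ring
    rw [habs]
    rcases le_or_gt 0 x with hx | hx
    · have h1 : |x| * (ψ x * |G x|) ≤ Cf * (x * (ψ x * ∫ t in Ioi x, φ t)) := by
        rw [abs_of_nonneg hx]
        calc x * (ψ x * |G x|) ≤ x * (ψ x * (Cf * ∫ t in Ioi x, φ t)) := by
              refine mul_le_mul_of_nonneg_left ?_ hx
              exact mul_le_mul_of_nonneg_left (hG_pos x) (exp_nonneg _)
          _ = Cf * (x * (ψ x * ∫ t in Ioi x, φ t)) := by ring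
      have h2 : Cf * (x * (ψ x * ∫ t in Ioi x, φ t)) ≤ Cf * B :=
        mul_le_mul_of_nonneg_left (hT x hx).2 hCf0
      have : |x| * (ψ x * |G x|) ≤ Cf * B := le_trans h1 h2
      gcongr
    · have hx' : (0:ℝ) ≤ -x := by linarith
      have h1 : |x| * (ψ x * |G x|) ≤ Cf * ((-x) * (ψ (-x) * ∫ t in Ioi (-x), φ t)) := by
        rw [abs_of_neg hx]
        calc (-x) * (ψ x * |G x|) ≤ (-x) * (ψ x * (Cf * ∫ t in Ioi (-x), φ t)) := by
              refine mul_le_mul_of_nonneg_left ?_ hx'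
              exact mul_le_mul_of_nonneg_left (hG_neg x) (exp_nonneg _)
          _ = Cf * ((-x) * (ψ (-x) * ∫ t in Ioi (-x), φ t)) := by rw [hψeven]; ring
      have h2 : Cf * ((-x) * (ψ (-x) * ∫ t in Ioi (-x), φ t)) ≤ Cf * B :=
        mul_le_mul_of_nonneg_left (hT (-x) hx').2 hCf0
      have : |x| * (ψ x * |G x|) ≤ Cf * B := le_trans h1 h2
      gcongr
  refine ⟨g, ?_, ?_, ?_, ?_⟩
  · rw [contDiff_one_iff_deriv]
    exact ⟨hgdiff, by rw [hderiv_eq]; fun_prop⟩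
  · exact ⟨Cf * B / v, hgabs⟩
  · refine ⟨(Cf * B / v + Cf) / v, fun x => ?_⟩
    rw [hderiv_eq]
    simp only []
    rw [abs_div, abs_of_pos hv]
    have h1 : |x * g x + f x| ≤ Cf * B / v + Cf :=
      le_trans (abs_add_le _ _) (add_le_add (hxgabs x) (hCf x))
    gcongr
  · intro x
    rw [hderiv_eq]
    field_simp
    ring

lemma stein_sol {v : ℝ} (hv : 0 < v) {f : ℝ → ℝ} (hf : Continuous f) {Cf : ℝ}
    (hCf : ∀ x, |f x| ≤ Cf) :
    ∃ g : ℝ → ℝ, ContDiff ℝ 1 g ∧ (∃ C, ∀ x, |g x| ≤ C) ∧ (∃ C, ∀ x, |deriv g x| ≤ C) ∧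
      ∀ x, v * deriv g x - x * g x =
        f x - (∫ t, f t * rexp (-(2*v)⁻¹ * t^2)) / (∫ t, rexp (-(2*v)⁻¹ * t^2)) := by
  have hb : (0:ℝ) < (2*v)⁻¹ := by positivity
  set m : ℝ := (∫ t, f t * rexp (-(2*v)⁻¹ * t^2)) / (∫ t, rexp (-(2*v)⁻¹ * t^2)) with hm
  have hI : (∫ t, rexp (-(2*v)⁻¹ * t^2)) = √(π / (2*v)⁻¹) := integral_gaussian _
  have hIpos : (0:ℝ) < ∫ t, rexp (-(2*v)⁻¹ * t^2) := by
    rw [hI]; apply Real.sqrt_pos.mpr; positivity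
  have hφint : Integrable (fun t => rexp (-(2*v)⁻¹ * t^2)) := integrable_exp_neg_mul_sq hb
  have hfφint : Integrable (fun t => f t * rexp (-(2*v)⁻¹ * t^2)) :=
    hφint.bdd_mul hf.aestronglyMeasurable (c := Cf) (Filter.Eventually.of_forall fun x => by simpa using hCf x)
  have hzero : ∫ t, (f t - m) * rexp (-(2*v)⁻¹ * t^2) = 0 := by
    have hsub : (fun t => (f t - m) * rexp (-(2*v)⁻¹ * t^2)) =
        fun t => f t * rexp (-(2*v)⁻¹ * t^2) - m * rexp (-(2*v)⁻¹ * t^2) := by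
      funext t; ring
    rw [hsub, integral_sub hfφint (hφint.const_mul m), integral_const_mul, hm,
      div_mul_cancel₀ _ hIpos.ne', sub_self]
  obtain ⟨g, h1, h2, h3, h4⟩ := stein_core hv (f := fun x => f x - m) (by fun_prop)
    (Cf := Cf + |m|) (fun x => le_trans (abs_sub _ _) (by gcongr; exact hCf x)) hzero
  exact ⟨g, h1, h2, h3, fun x => by rw [h4 x]⟩

open ProbabilityTheory in
lemma gauss_int {v : ℝ} (hv : 0 < v) (hv' : 0 ≤ v) {f : ℝ → ℝ} (hf : Continuous f) {Cf : ℝ}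
    (hCf : ∀ x, |f x| ≤ Cf) :
    ∫ x, f x ∂(gaussianReal 0 ⟨v, hv'⟩) =
      (∫ t, f t * rexp (-(2*v)⁻¹ * t^2)) / (∫ t, rexp (-(2*v)⁻¹ * t^2)) := by
  have hb : (0:ℝ) < (2*v)⁻¹ := by positivity
  set ν : ℝ≥0 := ⟨v, hv'⟩ with hν
  have hν0 : ν ≠ 0 := by
    intro h
    rw [← NNReal.coe_eq_zero] at h
    simp only [hν, NNReal.coe_mk] at h
    exact hv.ne' h
  have hcoe : (ν : ℝ) = v := rfl
  rw [gaussianReal_of_var_ne_zero 0 hν0]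
  have hd : gaussianPDF 0 ν = fun x => ((gaussianPDFReal 0 ν x).toNNReal : ℝ≥0∞) := rfl
  rw [hd, integral_withDensity_eq_integral_smul
    ((measurable_gaussianPDFReal 0 ν).real_toNNReal) f]
  have hpdf : ∀ x, gaussianPDFReal 0 ν x = (√(2*π*v))⁻¹ * rexp (-(2*v)⁻¹ * x^2) := by
    intro x
    rw [gaussianPDFReal, hcoe, sub_zero]
    congr 1
    field_simp
  have hsmul : ∀ x, (gaussianPDFReal 0 ν x).toNNReal • f x =
      (√(2*π*v))⁻¹ * (f x * rexp (-(2*v)⁻¹ * x^2)) := by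
    intro x
    rw [NNReal.smul_def, smul_eq_mul, Real.coe_toNNReal _ (gaussianPDFReal_nonneg 0 ν x), hpdf]
    ring
  rw [show (fun x => (gaussianPDFReal 0 ν x).toNNReal • f x) =
      fun x => (√(2*π*v))⁻¹ * (f x * rexp (-(2*v)⁻¹ * x^2)) from funext hsmul]
  rw [integral_const_mul]
  have hI : (∫ t, rexp (-(2*v)⁻¹ * t^2)) = √(2*π*v) := by
    rw [integral_gaussian]
    congr 1
    field_simp
  rw [hI, div_eq_inv_mul]

end SteinAux

open Real Set Filter in
open scoped NNReal ENNReal in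
theorem stmt_15 {Ω : Type*} [MeasurableSpace Ω] (μ : Measure Ω) [IsProbabilityMeasure μ]
    (σ₁ : ℝ) (hσ₁ : 0 < σ₁) (X₁ X₂ : Ω → ℝ)
    (hX₁ : Measurable X₁) (hX₂ : Measurable X₂)
    (hX₁int : Integrable X₁ μ)
    (hstein : ∀ g h : ℝ → ℝ, ContDiff ℝ 1 g → (∃ C, ∀ x, |g x| ≤ C) →
      (∃ C, ∀ x, |deriv g x| ≤ C) → Continuous h → (∃ C, ∀ x, |h x| ≤ C) →
      ∫ ω, h (X₂ ω) * (σ₁^2 * deriv g (X₁ ω) - X₁ ω * g (X₁ ω)) ∂μ = 0) :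
    Measure.map X₁ μ = gaussianReal 0 ⟨σ₁^2, sq_nonneg σ₁⟩ ∧ IndepFun X₁ X₂ μ := by
  have hv : (0:ℝ) < σ₁^2 := by positivity
  set γ : Measure ℝ := gaussianReal 0 ⟨σ₁^2, sq_nonneg σ₁⟩ with hγdef
  have hγprob : IsProbabilityMeasure γ := by rw [hγdef]; exact instIsProbabilityMeasureGaussianReal _ _
  -- Step B : key integral identity
  have key : ∀ f h : ℝ → ℝ, Continuous f → (∀ x, |f x| ≤ 1) → Continuous h → (∀ x, |h x| ≤ 1) →
      ∫ ω, h (X₂ ω) * f (X₁ ω) ∂μ = (∫ x, f x ∂γ) * ∫ ω, h (X₂ ω) ∂μ := by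
    intro f h hf hfb hh hhb
    obtain ⟨g, hg1, hg2, hg3, hg4⟩ := stein_sol hv hf hfb
    have hs := hstein g h hg1 hg2 hg3 hh ⟨1, hhb⟩
    set m : ℝ := (∫ t, f t * rexp (-(2*σ₁^2)⁻¹ * t^2)) / (∫ t, rexp (-(2*σ₁^2)⁻¹ * t^2)) with hm
    have hrw : (fun ω => h (X₂ ω) * (σ₁^2 * deriv g (X₁ ω) - X₁ ω * g (X₁ ω))) =
        fun ω => h (X₂ ω) * f (X₁ ω) - m * h (X₂ ω) := by
      funext ω
      rw [hg4 (X₁ ω)]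
      ring
    rw [hrw] at hs
    have hAmeas : AEStronglyMeasurable (fun ω => h (X₂ ω) * f (X₁ ω)) μ :=
      (((hh.measurable.comp hX₂).mul (hf.measurable.comp hX₁))).aestronglyMeasurable
    have hA : Integrable (fun ω => h (X₂ ω) * f (X₁ ω)) μ := by
      refine (integrable_const (1:ℝ)).mono' hAmeas (Filter.Eventually.of_forall fun ω => ?_)
      rw [Real.norm_eq_abs, abs_mul]
      calc |h (X₂ ω)| * |f (X₁ ω)| ≤ 1 * 1 :=
        mul_le_mul (hhb _) (hfb _) (abs_nonneg _) zero_le_one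
        _ = 1 := one_mul 1
    have hB : Integrable (fun ω => h (X₂ ω)) μ := by
      refine (integrable_const (1:ℝ)).mono'
        ((hh.measurable.comp hX₂)).aestronglyMeasurable
        (Filter.Eventually.of_forall fun ω => ?_)
      rw [Real.norm_eq_abs]; exact hhb _
    rw [integral_sub hA (hB.const_mul m), integral_const_mul, sub_eq_zero] at hs
    rw [hs, gauss_int hv (sq_nonneg σ₁) hf hfb, hm]
  -- Step C : measures agree on closed rectangles
  have hpairm : Measurable fun ω => (X₁ ω, X₂ ω) := hX₁.prodMk hX₂
  have hX₂prob : IsProbabilityMeasure (Measure.map X₂ μ) :=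
    Measure.isProbabilityMeasure_map hX₂.aemeasurable
  have rect : ∀ s t : Set ℝ, IsClosed s → IsClosed t →
      μ (X₁ ⁻¹' s ∩ X₂ ⁻¹' t) = γ s * μ (X₂ ⁻¹' t) := by
    intro s t hs ht
    set δ : ℕ → ℝ := fun n => (n+1 : ℝ)⁻¹ with hδ
    have δpos : ∀ n, 0 < δ n := fun n => by rw [hδ]; positivity
    have δlim : Tendsto δ atTop (nhds 0) := by
      rw [hδ]
      simpa [one_div] using tendsto_one_div_add_atTop_nhds_zero_nat (𝕜 := ℝ)
    set F : ℕ → ℝ → ℝ := fun n x => ((thickenedIndicator (δpos n) s x : ℝ≥0) : ℝ) with hF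
    set H : ℕ → ℝ → ℝ := fun n x => ((thickenedIndicator (δpos n) t x : ℝ≥0) : ℝ) with hH
    have hFc : ∀ n, Continuous (F n) :=
      fun n => NNReal.continuous_coe.comp (thickenedIndicator (δpos n) s).continuous
    have hHc : ∀ n, Continuous (H n) :=
      fun n => NNReal.continuous_coe.comp (thickenedIndicator (δpos n) t).continuous
    have hFb : ∀ n x, |F n x| ≤ 1 := by
      intro n x
      rw [hF, abs_of_nonneg (by positivity)]
      exact_mod_cast thickenedIndicator_le_one (δpos n) s x
    have hHb : ∀ n x, |H n x| ≤ 1 := by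
      intro n x
      rw [hH, abs_of_nonneg (by positivity)]
      exact_mod_cast thickenedIndicator_le_one (δpos n) t x
    have hFnn : ∀ n x, 0 ≤ F n x := fun n x => by rw [hF]; positivity
    -- pointwise limits
    have hFlim : ∀ x, Tendsto (fun n => F n x) atTop (nhds (s.indicator (fun _ => (1:ℝ)) x)) := by
      intro x
      have h1 := thickenedIndicator_tendsto_indicator_closure δpos δlim s
      rw [hs.closure_eq] at h1
      have h2 := tendsto_pi_nhds.mp h1 x
      have h3 := (NNReal.continuous_coe.tendsto _).comp h2
      convert h3 using 1
      · exact rfl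
      by_cases hx : x ∈ s <;> simp [indicator, hx]
    have hHlim : ∀ x, Tendsto (fun n => H n x) atTop (nhds (t.indicator (fun _ => (1:ℝ)) x)) := by
      intro x
      have h1 := thickenedIndicator_tendsto_indicator_closure δpos δlim t
      rw [ht.closure_eq] at h1
      have h2 := tendsto_pi_nhds.mp h1 x
      have h3 := (NNReal.continuous_coe.tendsto _).comp h2
      convert h3 using 1
      · exact rfl
      by_cases hx : x ∈ t <;> simp [indicator, hx]
    -- three limits
    have T1 : Tendsto (fun n => ∫ ω, H n (X₂ ω) * F n (X₁ ω) ∂μ) atTop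
        (nhds (μ (X₁ ⁻¹' s ∩ X₂ ⁻¹' t)).toReal) := by
      have hlim := tendsto_integral_of_dominated_convergence (μ := μ)
        (F := fun n ω => H n (X₂ ω) * F n (X₁ ω))
        (f := fun ω => t.indicator (fun _ => (1:ℝ)) (X₂ ω) * s.indicator (fun _ => (1:ℝ)) (X₁ ω))
        (bound := fun _ => (1:ℝ))
        (fun n => (((hHc n).measurable.comp hX₂).mul
          ((hFc n).measurable.comp hX₁)).aestronglyMeasurable)
        (integrable_const 1)
        (fun n => Filter.Eventually.of_forall fun ω => by
          rw [Real.norm_eq_abs, abs_mul]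
          calc |H n (X₂ ω)| * |F n (X₁ ω)| ≤ 1 * 1 :=
            mul_le_mul (hHb n _) (hFb n _) (abs_nonneg _) zero_le_one
            _ = 1 := one_mul 1)
        (Filter.Eventually.of_forall fun ω => (hHlim (X₂ ω)).mul (hFlim (X₁ ω)))
      have heq : ∫ ω, t.indicator (fun _ => (1:ℝ)) (X₂ ω) * s.indicator (fun _ => (1:ℝ)) (X₁ ω) ∂μ
          = (μ (X₁ ⁻¹' s ∩ X₂ ⁻¹' t)).toReal := by
        have h2 : (fun ω => t.indicator (fun _ => (1:ℝ)) (X₂ ω) *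
            s.indicator (fun _ => (1:ℝ)) (X₁ ω)) =
            (X₁ ⁻¹' s ∩ X₂ ⁻¹' t).indicator (fun _ => (1:ℝ)) := by
          funext ω
          by_cases h1 : X₁ ω ∈ s <;> by_cases h2 : X₂ ω ∈ t <;>
            simp [indicator, h1, h2]
        rw [h2, integral_indicator_const (1:ℝ)
          ((hs.measurableSet.preimage hX₁).inter (ht.measurableSet.preimage hX₂))]
        simp [Measure.real]
      rwa [heq] at hlim
    have T2 : Tendsto (fun n => ∫ x, F n x ∂γ) atTop (nhds (γ s).toReal) := by
      have hlim := tendsto_integral_of_dominated_convergence (μ := γ)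
        (F := fun n x => F n x)
        (f := fun x => s.indicator (fun _ => (1:ℝ)) x)
        (bound := fun _ => (1:ℝ))
        (fun n => (hFc n).measurable.aestronglyMeasurable)
        (integrable_const 1)
        (fun n => Filter.Eventually.of_forall fun x => by
          rw [Real.norm_eq_abs]; exact hFb n x)
        (Filter.Eventually.of_forall fun x => hFlim x)
      have heq : ∫ x, s.indicator (fun _ => (1:ℝ)) x ∂γ = (γ s).toReal := by
        rw [integral_indicator_const (1:ℝ) hs.measurableSet]; simp [Measure.real]
      rwa [heq] at hlim
    have T3 : Tendsto (fun n => ∫ ω, H n (X₂ ω) ∂μ) atTop (nhds (μ (X₂ ⁻¹' t)).toReal) := by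
      have hlim := tendsto_integral_of_dominated_convergence (μ := μ)
        (F := fun n ω => H n (X₂ ω))
        (f := fun ω => t.indicator (fun _ => (1:ℝ)) (X₂ ω))
        (bound := fun _ => (1:ℝ))
        (fun n => ((hHc n).measurable.comp hX₂).aestronglyMeasurable)
        (integrable_const 1)
        (fun n => Filter.Eventually.of_forall fun ω => by
          rw [Real.norm_eq_abs]; exact hHb n _)
        (Filter.Eventually.of_forall fun ω => hHlim (X₂ ω))
      have heq : ∫ ω, t.indicator (fun _ => (1:ℝ)) (X₂ ω) ∂μ = (μ (X₂ ⁻¹' t)).toReal := by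
        have h2 : (fun ω => t.indicator (fun _ => (1:ℝ)) (X₂ ω)) =
            (X₂ ⁻¹' t).indicator (fun _ => (1:ℝ)) := by
          funext ω; by_cases h1 : X₂ ω ∈ t <;> simp [indicator, h1]
        rw [h2, integral_indicator_const (1:ℝ) (ht.measurableSet.preimage hX₂)]; simp [Measure.real]
      rwa [heq] at hlim
    have hseq : ∀ n, ∫ ω, H n (X₂ ω) * F n (X₁ ω) ∂μ =
        (∫ x, F n x ∂γ) * ∫ ω, H n (X₂ ω) ∂μ :=
      fun n => key (F n) (H n) (hFc n) (hFb n) (hHc n) (hHb n)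
    have T1' : Tendsto (fun n => ∫ ω, H n (X₂ ω) * F n (X₁ ω) ∂μ) atTop
        (nhds ((γ s).toReal * (μ (X₂ ⁻¹' t)).toReal)) := by
      rw [show (fun n => ∫ ω, H n (X₂ ω) * F n (X₁ ω) ∂μ) =
        fun n => (∫ x, F n x ∂γ) * ∫ ω, H n (X₂ ω) ∂μ from funext hseq]
      exact T2.mul T3
    have hreal : (μ (X₁ ⁻¹' s ∩ X₂ ⁻¹' t)).toReal = (γ s).toReal * (μ (X₂ ⁻¹' t)).toReal :=
      tendsto_nhds_unique T1 T1'
    have h1 : μ (X₁ ⁻¹' s ∩ X₂ ⁻¹' t) ≠ ⊤ := measure_ne_top _ _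
    have h2 : γ s * μ (X₂ ⁻¹' t) ≠ ⊤ := ENNReal.mul_ne_top (measure_ne_top _ _) (measure_ne_top _ _)
    refine (ENNReal.toReal_eq_toReal_iff' h1 h2).mp ?_
    rw [ENNReal.toReal_mul, hreal]
  -- measure equality on ℝ × ℝ
  have hCS : IsCountablySpanning {s : Set ℝ | IsClosed s} :=
    ⟨fun _ => univ, fun _ => isClosed_univ, iUnion_const univ⟩
  have hreal_ms : Real.measurableSpace =
      MeasurableSpace.generateFrom {s : Set ℝ | IsClosed s} := by
    rw [BorelSpace.measurable_eq (α := ℝ), borel_eq_generateFrom_isClosed]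
  have prodEq : Measure.map (fun ω => (X₁ ω, X₂ ω)) μ = γ.prod (Measure.map X₂ μ) := by
    refine MeasureTheory.ext_of_generate_finite
      (image2 (· ×ˢ ·) {s : Set ℝ | IsClosed s} {t : Set ℝ | IsClosed t}) ?_ ?_ ?_ ?_
    · rw [hreal_ms]
      exact generateFrom_prod_eq hCS hCS
    · rintro u ⟨s1, hs1, t1, ht1, rfl⟩ w ⟨s2, hs2, t2, ht2, rfl⟩ _
      rw [prod_inter_prod]
      exact mem_image2_of_mem (hs1.inter hs2) (ht1.inter ht2)
    · rintro u ⟨s, hs, t, ht, rfl⟩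
      rw [Measure.map_apply hpairm (hs.measurableSet.prod ht.measurableSet),
        Measure.prod_prod, Measure.map_apply hX₂ ht.measurableSet]
      have hpre : (fun ω => (X₁ ω, X₂ ω)) ⁻¹' (s ×ˢ t) = X₁ ⁻¹' s ∩ X₂ ⁻¹' t := by
        ext ω; simp [mem_prod]
      rw [hpre]
      exact rect s t hs ht
    · rw [Measure.map_apply hpairm MeasurableSet.univ]
      simp [measure_univ]
  have hmap1 : Measure.map X₁ μ = γ := by
    have h1 : Measure.map X₁ μ = Measure.map Prod.fst (Measure.map (fun ω => (X₁ ω, X₂ ω)) μ) := by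
      rw [Measure.map_map measurable_fst hpairm]
      rfl
    rw [h1, prodEq, Measure.map_fst_prod]
    simp [measure_univ]
  refine ⟨hmap1, ?_⟩
  rw [ProbabilityTheory.indepFun_iff_map_prod_eq_prod_map_map hX₁.aemeasurable hX₂.aemeasurable,
    prodEq, hmap1]
end

section
/- Let σ > 0, let γ be the centered Gaussian measure on ℝ with variance σ², let h : ℝ → ℝ be measurable with |h(s)| ≤ 1 for all s, and set m = ∫_ℝ h dγ. Define f(x) = (1/σ²) e^{x²/(2σ²)} ∫_{−∞}^{x} (h(s) − m) e^{−s²/(2σ²)} ds. Then |f(x)| ≤ (1/σ)√(π/2) for every x ∈ ℝ. -/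
open MeasureTheory ProbabilityTheory Set Real

set_option linter.unusedVariables false
set_option linter.deprecated false



noncomputable def auxW (σ s : ℝ) : ℝ := Real.exp (-s^2 / (2 * σ^2))
noncomputable def auxG (σ x : ℝ) : ℝ := ∫ u in Set.Iic x, auxW σ u
noncomputable def auxT (σ : ℝ) : ℝ := Real.sqrt (2 * π * σ^2)

lemma auxW_eq (σ : ℝ) : auxW σ = fun s => Real.exp (-(2*σ^2)⁻¹ * s^2) := by
  funext s; unfold auxW; congr 1; ring

lemma auxb_pos {σ : ℝ} (hσ : 0 < σ) : 0 < (2*σ^2)⁻¹ := by positivity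

lemma auxW_int {σ : ℝ} (hσ : 0 < σ) : Integrable (auxW σ) := by
  rw [auxW_eq]; exact integrable_exp_neg_mul_sq (auxb_pos hσ)

lemma auxW_cont (σ : ℝ) : Continuous (auxW σ) := by
  unfold auxW; fun_prop

lemma auxW_pos (σ s : ℝ) : 0 < auxW σ s := Real.exp_pos _

lemma auxT_pos {σ : ℝ} (hσ : 0 < σ) : 0 < auxT σ := by
  unfold auxT; positivity

lemma auxT_sq {σ : ℝ} (hσ : 0 < σ) : (auxT σ)^2 = 2 * π * σ^2 := by
  unfold auxT; rw [Real.sq_sqrt]; positivity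

lemma auxW_total {σ : ℝ} (hσ : 0 < σ) : ∫ s, auxW σ s = auxT σ := by
  rw [auxW_eq]
  rw [integral_gaussian]
  unfold auxT; congr 1
  field_simp

lemma auxG_T_sub {σ : ℝ} (hσ : 0 < σ) (x : ℝ) :
    auxT σ - auxG σ x = ∫ u in Set.Ioi x, auxW σ u := by
  have := intervalIntegral.integral_Iic_add_Ioi (b := x) ((auxW_int hσ).integrableOn) ((auxW_int hσ).integrableOn)
  rw [auxW_total hσ] at this
  unfold auxG; linarith

lemma auxG_pos {σ : ℝ} (hσ : 0 < σ) (x : ℝ) : 0 < auxG σ x := by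
  unfold auxG
  rw [setIntegral_pos_iff_support_of_nonneg_ae]
  · have : Function.support (auxW σ) = Set.univ := by
      ext s; simp [Function.mem_support, (auxW_pos σ s).ne']
    rw [this, Set.univ_inter]
    simp [Real.volume_Iic]
  · exact Filter.Eventually.of_forall fun s => (auxW_pos σ s).le
  · exact (auxW_int hσ).integrableOn

lemma auxG_lt_T {σ : ℝ} (hσ : 0 < σ) (x : ℝ) : auxG σ x < auxT σ := by
  have h := auxG_T_sub hσ x
  have : 0 < ∫ u in Set.Ioi x, auxW σ u := by
    rw [setIntegral_pos_iff_support_of_nonneg_ae]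
    · have : Function.support (auxW σ) = Set.univ := by
        ext s; simp [Function.mem_support, (auxW_pos σ s).ne']
      rw [this, Set.univ_inter]
      simp [Real.volume_Ioi]
    · exact Filter.Eventually.of_forall fun s => (auxW_pos σ s).le
    · exact (auxW_int hσ).integrableOn
  linarith

lemma auxG_neg {σ : ℝ} (hσ : 0 < σ) (x : ℝ) : auxG σ (-x) = auxT σ - auxG σ x := by
  rw [auxG_T_sub hσ x]
  unfold auxG
  have h1 : ∀ u : ℝ, auxW σ u = auxW σ (-u) := by intro u; unfold auxW; rw [neg_sq]
  calc ∫ u in Set.Iic (-x), auxW σ u = ∫ u in Set.Iic (-x), auxW σ (-u) := by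
        exact setIntegral_congr_fun measurableSet_Iic fun u _ => h1 u
    _ = ∫ u in Set.Ioi x, auxW σ u := by rw [integral_comp_neg_Iic]; rw [neg_neg]

lemma auxG_zero {σ : ℝ} (hσ : 0 < σ) : auxG σ 0 = auxT σ / 2 := by
  have := auxG_neg hσ 0
  rw [neg_zero] at this
  linarith

lemma auxG_hasDeriv {σ : ℝ} (hσ : 0 < σ) (x : ℝ) : HasDerivAt (auxG σ) (auxW σ x) x := by
  have heq : auxG σ = fun y => auxG σ 0 + ∫ u in (0:ℝ)..y, auxW σ u := by
    funext y
    have := intervalIntegral.integral_Iic_sub_Iic (a := 0) (b := y)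
      ((auxW_int hσ).integrableOn) ((auxW_int hσ).integrableOn)
    unfold auxG; linarith
  rw [heq]
  exact (intervalIntegral.integral_hasDerivAt_right
    ((auxW_int hσ).intervalIntegrable)
    ((auxW_cont σ).stronglyMeasurable.stronglyMeasurableAtFilter)
    (auxW_cont σ).continuousAt).const_add _

noncomputable def auxV (σ y : ℝ) : ℝ := 2 * auxG σ y - auxT σ - π/2 * y
noncomputable def auxB (σ y : ℝ) : ℝ :=
  π/2 * σ^2 * auxW σ y - auxG σ y * (auxT σ - auxG σ y)


lemma auxW_hasDeriv {σ : ℝ} (hσ : 0 < σ) (y : ℝ) :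
    HasDerivAt (auxW σ) (auxW σ y * (-y/σ^2)) y := by
  have h1 : HasDerivAt (fun y : ℝ => -y^2 / (2*σ^2)) (-y/σ^2) y := by
    have h2 := ((hasDerivAt_pow 2 y).neg).div_const (2*σ^2)
    refine h2.congr_deriv ?_
    have : σ ^ 2 ≠ 0 := by positivity
    field_simp
    ring
  have := h1.exp
  unfold auxW
  convert this using 2

lemma auxV_hasDeriv {σ : ℝ} (hσ : 0 < σ) (y : ℝ) :
    HasDerivAt (auxV σ) (2 * auxW σ y - π/2) y := by
  have h := ((auxG_hasDeriv hσ y).const_mul 2).sub_const (auxT σ)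
  have h2 := h.sub ((hasDerivAt_id y).const_mul (π/2))
  unfold auxV
  refine h2.congr_deriv ?_
  ring

lemma auxB_hasDeriv {σ : ℝ} (hσ : 0 < σ) (y : ℝ) :
    HasDerivAt (auxB σ) (auxW σ y * auxV σ y) y := by
  have hG := auxG_hasDeriv hσ y
  have hW := auxW_hasDeriv hσ y
  have h1 := hW.const_mul (π/2 * σ^2)
  have h2 := hG.mul ((hasDerivAt_const y (auxT σ)).sub hG)
  have h := h1.sub h2
  unfold auxB auxV
  refine h.congr_deriv ?_
  have : σ ^ 2 ≠ 0 := by positivity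
  field_simp
  simp only [Pi.sub_apply]
  ring

lemma auxV_concave {σ : ℝ} (hσ : 0 < σ) : ConcaveOn ℝ (Set.Ici 0) (auxV σ) := by
  apply AntitoneOn.concaveOn_of_deriv (convex_Ici 0)
  · exact fun y _ => ((auxV_hasDeriv hσ y).continuousAt).continuousWithinAt
  · exact fun y _ => ((auxV_hasDeriv hσ y).differentiableAt).differentiableWithinAt
  · intro y1 hy1 y2 hy2 h12
    rw [(auxV_hasDeriv hσ y1).deriv, (auxV_hasDeriv hσ y2).deriv]
    rw [interior_Ici] at hy1 hy2
    have : auxW σ y2 ≤ auxW σ y1 := by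
      unfold auxW
      apply Real.exp_le_exp.2
      have h2 : σ^2 > 0 := by positivity
      have : y1^2 ≤ y2^2 := by nlinarith [le_of_lt (show 0 < y1 from hy1)]
      apply div_le_div_of_nonneg_right ?_ ?_ |>.trans_eq rfl
      all_goals nlinarith
    linarith

lemma auxV_zero {σ : ℝ} (hσ : 0 < σ) : auxV σ 0 = 0 := by
  unfold auxV; rw [auxG_zero hσ]; ring

lemma auxW_zero (σ : ℝ) : auxW σ 0 = 1 := by
  unfold auxW; norm_num

lemma auxB_zero {σ : ℝ} (hσ : 0 < σ) : auxB σ 0 = 0 := by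
  unfold auxB
  rw [auxG_zero hσ, auxW_zero]
  have := auxT_sq hσ
  nlinarith

lemma aux_mul_int {σ : ℝ} (hσ : 0 < σ) : Integrable (fun u : ℝ => u * auxW σ u) := by
  rw [auxW_eq]
  exact integrable_mul_exp_neg_mul_sq (auxb_pos hσ)

lemma auxW_tendsto {σ : ℝ} (hσ : 0 < σ) :
    Filter.Tendsto (fun u => auxW σ u) Filter.atTop (nhds 0) := by
  rw [auxW_eq]
  have h1 : Filter.Tendsto (fun u : ℝ => -(2*σ^2)⁻¹ * u^2) Filter.atTop Filter.atBot := by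
    apply Filter.Tendsto.const_mul_atTop_of_neg
    · have := auxb_pos hσ; linarith
    · exact Filter.tendsto_pow_atTop (by norm_num) |>.comp Filter.tendsto_id
  exact Real.tendsto_exp_atBot.comp h1

lemma aux_int_Ioi {σ : ℝ} (hσ : 0 < σ) {y : ℝ} :
    ∫ u in Set.Ioi y, u * auxW σ u = σ^2 * auxW σ y := by
  have hderiv : ∀ u ∈ Set.Ici y, HasDerivAt (fun u => -σ^2 * auxW σ u) (u * auxW σ u) u := by
    intro u _
    have := (auxW_hasDeriv hσ u).const_mul (-σ^2)
    refine this.congr_deriv ?_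
    have : σ^2 ≠ 0 := by positivity
    field_simp
  have htend : Filter.Tendsto (fun u => -σ^2 * auxW σ u) Filter.atTop (nhds 0) := by
    have := (auxW_tendsto hσ).const_mul (-σ^2)
    simpa using this
  have := integral_Ioi_of_hasDerivAt_of_tendsto' hderiv ((aux_mul_int hσ).integrableOn) htend
  rw [this]; ring

lemma aux_tail {σ : ℝ} (hσ : 0 < σ) {y : ℝ} (hy : 0 < y) :
    auxT σ - auxG σ y ≤ σ^2 / y * auxW σ y := by
  rw [auxG_T_sub hσ y]
  have step1 : ∫ u in Set.Ioi y, auxW σ u ≤ ∫ u in Set.Ioi y, (1/y) * (u * auxW σ u) := by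
    apply setIntegral_mono_on ((auxW_int hσ).integrableOn)
      (((aux_mul_int hσ).const_mul (1/y)).integrableOn) measurableSet_Ioi
    intro u hu
    have hu' : y < u := hu
    have hw := (auxW_pos σ u).le
    rw [one_div, ← mul_assoc]
    have h1 : (1:ℝ) ≤ y⁻¹ * u := by rw [inv_mul_eq_div, le_div_iff₀ hy]; linarith
    nlinarith [mul_le_mul_of_nonneg_right h1 hw]
  calc ∫ u in Set.Ioi y, auxW σ u ≤ ∫ u in Set.Ioi y, (1/y) * (u * auxW σ u) := step1
    _ = (1/y) * ∫ u in Set.Ioi y, u * auxW σ u := by rw [integral_const_mul]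
    _ = σ^2 / y * auxW σ y := by rw [aux_int_Ioi hσ]; ring


lemma aux_key_nonneg {σ : ℝ} (hσ : 0 < σ) {x : ℝ} (hx : 0 ≤ x) : 0 ≤ auxB σ x := by
  by_contra hcon
  push_neg at hcon
  have hT : 0 < auxT σ := auxT_pos hσ
  set M := max x (2 * auxT σ / π + 1) with hM
  have hMx : x ≤ M := le_max_left _ _
  have hM2 : 2 * auxT σ / π + 1 ≤ M := le_max_right _ _
  have hMpos : 0 < M := lt_of_lt_of_le (by positivity) hM2
  have hBM : 0 ≤ auxB σ M := by
    have htail := aux_tail hσ hMpos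
    have htail2 : σ^2 / M * auxW σ M ≤ π * σ^2 / (2 * auxT σ) * auxW σ M := by
      apply mul_le_mul_of_nonneg_right _ (auxW_pos σ M).le
      rw [div_le_div_iff₀ hMpos (by positivity)]
      have h6 : 2 * auxT σ / π ≤ M := by linarith
      rw [div_le_iff₀ pi_pos] at h6
      nlinarith [sq_nonneg σ, hσ]
    have hG := auxG_pos hσ M
    have hGT := auxG_lt_T hσ M
    have h3 : auxG σ M * (auxT σ - auxG σ M) ≤ auxT σ * (auxT σ - auxG σ M) := by nlinarith
    have h4 : auxT σ * (auxT σ - auxG σ M) ≤ auxT σ * (π * σ^2 / (2 * auxT σ) * auxW σ M) := by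
      apply mul_le_mul_of_nonneg_left _ hT.le
      linarith
    have h5 : auxT σ * (π * σ^2 / (2 * auxT σ) * auxW σ M) = π/2 * σ^2 * auxW σ M := by
      field_simp
    unfold auxB
    linarith
  have hcont : Continuous (auxB σ) := by
    rw [continuous_iff_continuousAt]
    exact fun y => (auxB_hasDeriv hσ y).continuousAt
  obtain ⟨c, hc1, hc2⟩ := isCompact_Icc.exists_isMinOn (Set.nonempty_Icc.2 (le_trans hx hMx))
    hcont.continuousOn
  have hcx : auxB σ c ≤ auxB σ x := isMinOn_iff.1 hc2 x ⟨hx, hMx⟩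
  have hcneg : auxB σ c < 0 := lt_of_le_of_lt hcx hcon
  have hc0 : c ≠ 0 := by
    intro hh; rw [hh, auxB_zero hσ] at hcneg; exact lt_irrefl _ hcneg
  have hcM : c ≠ M := by
    intro hh; rw [hh] at hcneg; linarith
  have hcIoo : c ∈ Set.Ioo 0 M :=
    ⟨lt_of_le_of_ne hc1.1 (Ne.symm hc0), lt_of_le_of_ne hc1.2 hcM⟩
  have hlocal : IsLocalMin (auxB σ) c := hc2.isLocalMin (Icc_mem_nhds hcIoo.1 hcIoo.2)
  have hderiv0 : deriv (auxB σ) c = 0 := hlocal.deriv_eq_zero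
  rw [(auxB_hasDeriv hσ c).deriv] at hderiv0
  have hVc : auxV σ c = 0 := by
    rcases mul_eq_zero.1 hderiv0 with hh | hh
    · exact absurd hh (ne_of_gt (auxW_pos σ c))
    · exact hh
  have hvnonneg : ∀ z ∈ Set.Icc (0:ℝ) c, 0 ≤ auxV σ z := by
    intro z hz
    have hseg : z ∈ segment ℝ (0:ℝ) c := by rw [segment_eq_Icc hcIoo.1.le]; exact hz
    have h7 := (auxV_concave hσ).ge_on_segment Set.self_mem_Ici
      (Set.mem_Ici.2 hcIoo.1.le) hseg
    rw [auxV_zero hσ, hVc] at h7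
    simpa using h7
  have hmono : MonotoneOn (auxB σ) (Set.Icc 0 c) := by
    apply monotoneOn_of_deriv_nonneg (convex_Icc 0 c) hcont.continuousOn
    · exact fun y _ => (auxB_hasDeriv hσ y).differentiableAt.differentiableWithinAt
    · intro y hy
      rw [interior_Icc] at hy
      rw [(auxB_hasDeriv hσ y).deriv]
      exact mul_nonneg (auxW_pos σ y).le (hvnonneg y ⟨hy.1.le, hy.2.le⟩)
  have h8 := hmono ⟨le_refl 0, hcIoo.1.le⟩ ⟨hcIoo.1.le, le_refl c⟩ hcIoo.1.le
  rw [auxB_zero hσ] at h8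
  linarith

lemma aux_key_s17 {σ : ℝ} (hσ : 0 < σ) (x : ℝ) :
    auxG σ x * (auxT σ - auxG σ x) ≤ π/2 * σ^2 * auxW σ x := by
  rcases le_or_gt 0 x with hx | hx
  · have := aux_key_nonneg hσ hx; unfold auxB at this; linarith
  · have h1 := aux_key_nonneg hσ (x := -x) (by linarith)
    unfold auxB at h1
    rw [auxG_neg hσ x] at h1
    have hw : auxW σ (-x) = auxW σ x := by unfold auxW; rw [neg_sq]
    rw [hw] at h1
    have h2 : (auxT σ - auxG σ x) * (auxT σ - (auxT σ - auxG σ x))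
        = auxG σ x * (auxT σ - auxG σ x) := by ring
    linarith


lemma aux_m_eq {σ : ℝ} (hσ : 0 < σ) (h : ℝ → ℝ) :
    (∫ s, h s ∂(gaussianReal 0 ⟨σ^2, sq_nonneg σ⟩)) * auxT σ = ∫ s, h s * auxW σ s := by
  have hv : (⟨σ^2, sq_nonneg σ⟩ : NNReal) ≠ 0 := by
    intro hh
    have : σ^2 = 0 := congrArg NNReal.toReal hh
    nlinarith
  rw [gaussianReal_of_var_ne_zero _ hv]
  have hpdf : (gaussianPDF 0 ⟨σ^2, sq_nonneg σ⟩) =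
      fun x => ((Real.toNNReal (gaussianPDFReal 0 (⟨σ^2, sq_nonneg σ⟩ : NNReal) x) : NNReal) : ENNReal) := by
    funext x; rfl
  rw [hpdf]
  erw [integral_withDensity_eq_integral_smul
    ((measurable_gaussianPDFReal 0 _).real_toNNReal)]
  have heq : ∀ x : ℝ, (Real.toNNReal (gaussianPDFReal 0 (⟨σ^2, sq_nonneg σ⟩ : NNReal) x)) • h x
      = (auxT σ)⁻¹ * (h x * auxW σ x) := by
    intro x
    erw [NNReal.smul_def, smul_eq_mul,
      Real.coe_toNNReal _ (gaussianPDFReal_nonneg _ _ x)]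
    unfold gaussianPDFReal auxW auxT
    push_cast
    rw [sub_zero]
    erw [NNReal.coe_mk]
    ring
  rw [funext heq, integral_const_mul]
  have hT : 0 < auxT σ := by unfold auxT; positivity
  field_simp



theorem stmt_17 (σ : ℝ) (hσ : 0 < σ) (h : ℝ → ℝ)
    (hh_meas : Measurable h) (hh_bdd : ∀ s, |h s| ≤ 1)
    (m : ℝ) (hm : m = ∫ s, h s ∂(gaussianReal 0 ⟨σ^2, sq_nonneg σ⟩))
    (f : ℝ → ℝ)
    (hf : ∀ x : ℝ, f x = (1 / σ^2) * Real.exp (x^2 / (2 * σ^2)) *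
      ∫ s in Set.Iic x, (h s - m) * Real.exp (-s^2 / (2 * σ^2))) :
    ∀ x : ℝ, |f x| ≤ (1 / σ) * Real.sqrt (π / 2) := by
  intro x
  rw [hf x]
  have hT : 0 < auxT σ := auxT_pos hσ
  have hG : 0 < auxG σ x := auxG_pos hσ x
  have hGT : auxG σ x < auxT σ := auxG_lt_T hσ x
  have hσ2 : (0:ℝ) < σ^2 := by positivity
  have hmT : m * auxT σ = ∫ s, h s * auxW σ s := by rw [hm]; exact aux_m_eq hσ h
  have hint_hm : Integrable (fun s => (h s - m) * auxW σ s) :=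
    (auxW_int hσ).bdd_mul (c := 1 + |m|) ((hh_meas.sub measurable_const).aestronglyMeasurable)
      (Filter.Eventually.of_forall fun s => by
        rw [Real.norm_eq_abs]
        calc |h s - m| ≤ |h s| + |m| := abs_sub _ _
          _ ≤ 1 + |m| := by linarith [hh_bdd s])
  have hint_h : Integrable (fun s => h s * auxW σ s) :=
    (auxW_int hσ).bdd_mul (c := 1) hh_meas.aestronglyMeasurable
      (Filter.Eventually.of_forall fun s => by rw [Real.norm_eq_abs]; exact hh_bdd s)
  have hfull : ∫ s, (h s - m) * auxW σ s = 0 := by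
    have heq : (fun s => (h s - m) * auxW σ s)
        = fun s => h s * auxW σ s - m * auxW σ s := by funext s; ring
    rw [heq, integral_sub hint_h ((auxW_int hσ).const_mul m), integral_const_mul,
      auxW_total hσ]
    linarith
  set I := ∫ s in Set.Iic x, (h s - m) * auxW σ s with hIdef
  have hsplit : I + ∫ s in Set.Ioi x, (h s - m) * auxW σ s = 0 := by
    rw [hIdef, intervalIntegral.integral_Iic_add_Ioi hint_hm.integrableOn
      hint_hm.integrableOn, hfull]
  have bnd : ∀ (c : ℝ) (S : Set ℝ), MeasurableSet S → (∀ s, (h s - m) ≤ c) →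
      ∫ s in S, (h s - m) * auxW σ s ≤ c * ∫ s in S, auxW σ s := by
    intro c S hS hc
    rw [← integral_const_mul]
    exact setIntegral_mono_on hint_hm.integrableOn
      (((auxW_int hσ).const_mul c).integrableOn) hS
      (fun s _ => mul_le_mul_of_nonneg_right (hc s) (auxW_pos σ s).le)
  have bnd' : ∀ (c : ℝ) (S : Set ℝ), MeasurableSet S → (∀ s, -(h s - m) ≤ c) →
      -∫ s in S, (h s - m) * auxW σ s ≤ c * ∫ s in S, auxW σ s := by
    intro c S hS hc
    rw [← integral_const_mul, ← integral_neg]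
    refine setIntegral_mono_on hint_hm.neg.integrableOn
      (((auxW_int hσ).const_mul c).integrableOn) hS
      (fun s _ => ?_)
    have : -((h s - m) * auxW σ s) = (-(h s - m)) * auxW σ s := by ring
    rw [this]
    exact mul_le_mul_of_nonneg_right (hc s) (auxW_pos σ s).le
  have hub : ∀ s, h s - m ≤ 1 - m := fun s => by linarith [abs_le.1 (hh_bdd s)]
  have hlb : ∀ s, -(h s - m) ≤ 1 + m := fun s => by linarith [abs_le.1 (hh_bdd s)]
  have hIic_w : ∫ s in Set.Iic x, auxW σ s = auxG σ x := rfl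
  have hIoi_w : ∫ s in Set.Ioi x, auxW σ s = auxT σ - auxG σ x := (auxG_T_sub hσ x).symm
  have h1 : I ≤ (1 - m) * auxG σ x := by
    have := bnd (1 - m) (Set.Iic x) measurableSet_Iic hub; rwa [hIic_w] at this
  have h2 : I ≤ (1 + m) * (auxT σ - auxG σ x) := by
    have := bnd' (1 + m) (Set.Ioi x) measurableSet_Ioi hlb; rw [hIoi_w] at this; linarith
  have h3 : -I ≤ (1 + m) * auxG σ x := by
    have := bnd' (1 + m) (Set.Iic x) measurableSet_Iic hlb; rwa [hIic_w] at this
  have h4 : -I ≤ (1 - m) * (auxT σ - auxG σ x) := by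
    have := bnd (1 - m) (Set.Ioi x) measurableSet_Ioi hub; rw [hIoi_w] at this; linarith
  have habs : |I| * auxT σ ≤ 2 * (auxG σ x * (auxT σ - auxG σ x)) := by
    rcases abs_cases I with ⟨hc, _⟩ | ⟨hc, _⟩ <;> rw [hc]
    · nlinarith [mul_le_mul_of_nonneg_right h1 (sub_nonneg.2 hGT.le),
        mul_le_mul_of_nonneg_right h2 hG.le]
    · nlinarith [mul_le_mul_of_nonneg_right h4 hG.le,
        mul_le_mul_of_nonneg_right h3 (sub_nonneg.2 hGT.le)]
  have hIb : |I| ≤ π * σ^2 * auxW σ x / auxT σ := by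
    rw [le_div_iff₀ hT]
    calc |I| * auxT σ ≤ 2 * (auxG σ x * (auxT σ - auxG σ x)) := habs
      _ ≤ 2 * (π/2 * σ^2 * auxW σ x) := by linarith [aux_key_s17 hσ x]
      _ = π * σ^2 * auxW σ x := by ring
  have hexp : Real.exp (x^2 / (2 * σ^2)) * auxW σ x = 1 := by
    unfold auxW
    rw [← Real.exp_add]
    rw [show x^2 / (2*σ^2) + -x^2/(2*σ^2) = 0 by ring, Real.exp_zero]
  have hTσ : auxT σ = Real.sqrt (2*π) * σ := by
    unfold auxT
    rw [show 2*π*σ^2 = (2*π) * σ^2 by ring, Real.sqrt_mul (by positivity),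
      Real.sqrt_sq hσ.le]
  have hprod : Real.sqrt (2*π) * Real.sqrt (π/2) = π := by
    rw [← Real.sqrt_mul (by positivity), show 2*π*(π/2) = π^2 by ring,
      Real.sqrt_sq pi_pos.le]
  have hfinal : π / auxT σ = 1/σ * Real.sqrt (π/2) := by
    have hstep : 1/σ * Real.sqrt (π/2) * (Real.sqrt (2*π) * σ) = π := by
      calc 1/σ * Real.sqrt (π/2) * (Real.sqrt (2*π) * σ)
          = (Real.sqrt (2*π) * Real.sqrt (π/2)) * (σ / σ) := by ring
        _ = π := by rw [hprod, div_self hσ.ne', mul_one]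
    rw [hTσ, div_eq_iff (by positivity : Real.sqrt (2*π) * σ ≠ 0)]
    exact hstep.symm
  have hepos : (0:ℝ) < Real.exp (x^2 / (2*σ^2)) := Real.exp_pos _
  rw [abs_mul, abs_mul, abs_of_pos (by positivity : (0:ℝ) < 1/σ^2), abs_of_pos hepos]
  calc 1/σ^2 * Real.exp (x^2/(2*σ^2)) * |I|
      ≤ 1/σ^2 * Real.exp (x^2/(2*σ^2)) * (π * σ^2 * auxW σ x / auxT σ) := by
        apply mul_le_mul_of_nonneg_left hIb (by positivity)
    _ = (Real.exp (x^2/(2*σ^2)) * auxW σ x) * (π / auxT σ) := by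
        field_simp
    _ = 1/σ * Real.sqrt (π/2) := by rw [hexp, hfinal, one_mul]
end

section
/- Let σ₁ > 0, let γ be the centered Gaussian measure on ℝ with variance σ₁², and let (X₁, X₂) be an ℝ²-valued random vector such that X₁ has law γ; let ν be the law of X₂. Let ℓ : ℝ² → ℝ be bounded and continuous, set m_ℓ(x₂) = ∫_ℝ ℓ(y, x₂) dγ(y), and define f_ℓ(x₁, x₂) = (1/σ₁²) e^{x₁²/(2σ₁²)} ∫_{−∞}^{x₁} (ℓ(s, x₂) − m_ℓ(x₂)) e^{−s²/(2σ₁²)} ds. Then E[ℓ(X₁, X₂)] − ∫_{ℝ²} ℓ d(γ ⊗ ν) = E[σ₁² ∂₁f_ℓ(X₁, X₂) − X₁ f_ℓ(X₁, X₂)], where ∂₁f_ℓ denotes the partial derivative of f_ℓ with respect to its first variable and γ ⊗ ν is the product measure of γ and ν on ℝ². -/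
open MeasureTheory ProbabilityTheory Set

lemma key_deriv (σ₁ : ℝ) (hσ₁ : 0 < σ₁) (ℓ1 : ℝ → ℝ) (h1 : Continuous ℓ1)
    (C : ℝ) (hC : ∀ s, |ℓ1 s| ≤ C) (m a : ℝ) :
    HasDerivAt (fun x => (1 / σ₁^2) * Real.exp (x^2 / (2 * σ₁^2)) *
        ∫ s in Set.Iic x, (ℓ1 s - m) * Real.exp (-s^2 / (2 * σ₁^2)))
      ((a / σ₁^2) * ((1 / σ₁^2) * Real.exp (a^2 / (2 * σ₁^2)) *
        ∫ s in Set.Iic a, (ℓ1 s - m) * Real.exp (-s^2 / (2 * σ₁^2)))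
       + (1 / σ₁^2) * (ℓ1 a - m)) a := by
  have hσ2 : (0:ℝ) < σ₁^2 := by positivity
  set g : ℝ → ℝ := fun s => (ℓ1 s - m) * Real.exp (-s^2 / (2 * σ₁^2)) with hg
  have hgc : Continuous g := by
    exact (h1.sub continuous_const).mul (Real.continuous_exp.comp (by continuity))
  have hgi : Integrable g := by
    have hb : (0:ℝ) < 1 / (2 * σ₁^2) := by positivity
    have := (integrable_exp_neg_mul_sq hb).const_mul (C + |m|)
    refine this.mono' hgc.aestronglyMeasurable (Filter.Eventually.of_forall fun s => ?_)
    show |(ℓ1 s - m) * Real.exp (-s^2 / (2 * σ₁^2))| ≤ _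
    rw [abs_mul, Real.abs_exp]
    have h2 : -s^2 / (2 * σ₁^2) = -(1/(2*σ₁^2)) * s^2 := by ring
    rw [h2]
    have : |ℓ1 s - m| ≤ C + |m| := (abs_sub _ _).trans (by gcongr; exact hC s)
    calc |ℓ1 s - m| * Real.exp (-(1/(2*σ₁^2)) * s^2)
        ≤ (C + |m|) * Real.exp (-(1/(2*σ₁^2)) * s^2) := by gcongr
      _ ≤ (C + |m|) * Real.exp (-(1/(2*σ₁^2)) * s^2) := le_rfl
  set F : ℝ → ℝ := fun x => ∫ s in Set.Iic x, g s with hF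
  have hFeq : ∀ x, F x = F 0 + ∫ s in (0:ℝ)..x, g s := by
    intro x
    rw [← intervalIntegral.integral_Iic_sub_Iic hgi.integrableOn hgi.integrableOn]
    ring
  have hFd : HasDerivAt F (g a) a := by
    have : HasDerivAt (fun x => F 0 + ∫ s in (0:ℝ)..x, g s) (g a) a := by
      refine HasDerivAt.const_add _ ?_
      exact intervalIntegral.integral_hasDerivAt_right hgi.intervalIntegrable
        hgc.aestronglyMeasurable.stronglyMeasurableAtFilter hgc.continuousAt
    exact this.congr_of_eventuallyEq (Filter.Eventually.of_forall hFeq)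
  have hEd : HasDerivAt (fun x => Real.exp (x^2 / (2 * σ₁^2)))
      ((a / σ₁^2) * Real.exp (a^2 / (2 * σ₁^2))) a := by
    have h' : HasDerivAt (fun x : ℝ => x^2 / (2 * σ₁^2)) (a / σ₁^2) a := by
      have := (hasDerivAt_pow 2 a).div_const (2 * σ₁^2)
      refine this.congr_deriv ?_
      field_simp; ring
    have := h'.exp
    convert this using 1; ring
  have hprod := ((hEd.mul hFd).const_mul (1 / σ₁^2))
  have hex : Real.exp (a^2 / (2*σ₁^2)) * g a = ℓ1 a - m := by
    rw [hg]; simp only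
    rw [mul_comm (ℓ1 a - m), ← mul_assoc, ← Real.exp_add]
    have : a^2/(2*σ₁^2) + -a^2/(2*σ₁^2) = 0 := by ring
    rw [this, Real.exp_zero, one_mul]
  have heq : (fun x => (1 / σ₁^2) * Real.exp (x^2 / (2 * σ₁^2)) *
        ∫ s in Set.Iic x, (ℓ1 s - m) * Real.exp (-s^2 / (2 * σ₁^2)))
      = fun y => 1 / σ₁^2 * (Real.exp (y^2 / (2 * σ₁^2)) * F y) := by
    funext x; rw [mul_assoc]
  rw [heq]
  refine hprod.congr_deriv ?_
  simp only [hF]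
  linear_combination (1/σ₁^2) * hex

theorem stmt_18 {Ω : Type*} [MeasurableSpace Ω] (μ : Measure Ω) [IsProbabilityMeasure μ]
    (σ₁ : ℝ) (hσ₁ : 0 < σ₁) (X₁ X₂ : Ω → ℝ)
    (hX₁ : Measurable X₁) (hX₂ : Measurable X₂)
    (γ : Measure ℝ) (hγ : γ = gaussianReal 0 ⟨σ₁^2, sq_nonneg σ₁⟩)
    (hlaw : Measure.map X₁ μ = γ)
    (ν : Measure ℝ) (hν : ν = Measure.map X₂ μ)
    (ℓ : ℝ → ℝ → ℝ) (hℓ_cont : Continuous (Function.uncurry ℓ))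
    (hℓ_bdd : ∃ C, ∀ x y, |ℓ x y| ≤ C)
    (mℓ : ℝ → ℝ) (hmℓ : ∀ x₂, mℓ x₂ = ∫ y, ℓ y x₂ ∂γ)
    (fℓ : ℝ → ℝ → ℝ)
    (hfℓ : ∀ x₁ x₂ : ℝ, fℓ x₁ x₂ = (1 / σ₁^2) * Real.exp (x₁^2 / (2 * σ₁^2)) *
      ∫ s in Set.Iic x₁, (ℓ s x₂ - mℓ x₂) * Real.exp (-s^2 / (2 * σ₁^2))) :
    (∫ ω, ℓ (X₁ ω) (X₂ ω) ∂μ) - (∫ p : ℝ × ℝ, ℓ p.1 p.2 ∂(γ.prod ν)) =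
      ∫ ω, (σ₁^2 * deriv (fun x => fℓ x (X₂ ω)) (X₁ ω) - X₁ ω * fℓ (X₁ ω) (X₂ ω)) ∂μ := by
  obtain ⟨C, hC⟩ := hℓ_bdd
  have hσ2 : (0:ℝ) < σ₁^2 := by positivity
  have hγP : IsProbabilityMeasure γ := by rw [hγ]; exact instIsProbabilityMeasureGaussianReal _ _
  have hνP : IsProbabilityMeasure ν := by rw [hν]; exact Measure.isProbabilityMeasure_map hX₂.aemeasurable
  -- pointwise Stein identity
  have hpt : ∀ ω, σ₁^2 * deriv (fun x => fℓ x (X₂ ω)) (X₁ ω) - X₁ ω * fℓ (X₁ ω) (X₂ ω)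
      = ℓ (X₁ ω) (X₂ ω) - mℓ (X₂ ω) := by
    intro ω
    set c := X₂ ω
    set a := X₁ ω
    have hcont1 : Continuous (fun s => ℓ s c) := by
      have : (fun s => ℓ s c) = Function.uncurry ℓ ∘ (fun s => (s, c)) := rfl
      rw [this]; exact hℓ_cont.comp (by continuity)
    have hkey := key_deriv σ₁ hσ₁ (fun s => ℓ s c) hcont1 C (fun s => hC s c) (mℓ c) a
    have hfun : (fun x => fℓ x c) = (fun x => (1 / σ₁^2) * Real.exp (x^2 / (2 * σ₁^2)) *
        ∫ s in Set.Iic x, (ℓ s c - mℓ c) * Real.exp (-s^2 / (2 * σ₁^2))) := by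
      funext x; exact hfℓ x c
    rw [hfun]
    rw [hkey.deriv]
    rw [← hfℓ a c]
    field_simp
    ring
  rw [integral_congr_ae (Filter.Eventually.of_forall hpt)]
  -- measurability
  have hmeasℓ : AEStronglyMeasurable (fun ω => ℓ (X₁ ω) (X₂ ω)) μ := by
    have : (fun ω => ℓ (X₁ ω) (X₂ ω)) = Function.uncurry ℓ ∘ (fun ω => (X₁ ω, X₂ ω)) := rfl
    rw [this]
    exact (hℓ_cont.measurable.comp (hX₁.prodMk hX₂)).aestronglyMeasurable
  have hintℓ : Integrable (fun ω => ℓ (X₁ ω) (X₂ ω)) μ := by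
    refine (integrable_const C).mono' hmeasℓ (Filter.Eventually.of_forall fun ω => hC _ _)
  have hmℓ_sm : StronglyMeasurable mℓ := by
    have hsm : StronglyMeasurable (Function.uncurry fun x₂ y => ℓ y x₂) := by
      have : Continuous (Function.uncurry fun (x₂ y : ℝ) => ℓ y x₂) := by
        exact hℓ_cont.comp (continuous_snd.prodMk continuous_fst)
      exact this.stronglyMeasurable
    have := hsm.integral_prod_right' (ν := γ)
    have heq : mℓ = fun x₂ => ∫ y, ℓ y x₂ ∂γ := funext hmℓ
    rw [heq]; exact this
  have hmℓ_bdd : ∀ x₂, |mℓ x₂| ≤ C := by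
    intro x₂
    rw [hmℓ]
    calc |∫ y, ℓ y x₂ ∂γ| ≤ ∫ y, |ℓ y x₂| ∂γ := by
          simpa [Real.norm_eq_abs] using norm_integral_le_integral_norm (fun y => ℓ y x₂) (μ := γ)
      _ ≤ ∫ _y, C ∂γ := by
          refine integral_mono_of_nonneg (Filter.Eventually.of_forall fun y => abs_nonneg _)
            (integrable_const C) (Filter.Eventually.of_forall fun y => hC y x₂)
      _ = C := by simp
  have hintm : Integrable (fun ω => mℓ (X₂ ω)) μ := by
    refine (integrable_const C).mono'
      ((hmℓ_sm.comp_measurable hX₂).aestronglyMeasurable)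
      (Filter.Eventually.of_forall fun ω => hmℓ_bdd _)
  rw [integral_sub hintℓ hintm]
  congr 1
  -- ∫ prod = ∫ mℓ ∂ν = ∫ mℓ ∘ X₂ ∂μ
  have hℓprod_int : Integrable (fun p : ℝ × ℝ => ℓ p.1 p.2) (γ.prod ν) := by
    refine (integrable_const C).mono' hℓ_cont.aestronglyMeasurable
      (Filter.Eventually.of_forall fun p => hC _ _)
  rw [integral_prod_symm _ hℓprod_int]
  have : ∀ y, ∫ x, ℓ x y ∂γ = mℓ y := fun y => (hmℓ y).symm
  simp only [this]
  rw [hν, integral_map hX₂.aemeasurable hmℓ_sm.aestronglyMeasurable]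
end
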